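/- arXiv:2108.03549 — 2 statements merged into one kernel-verified Lean document; each statement's English description precedes it below -/
import Mathlib

section
/- Let (G,rs₁,φ) be a coloring-triple, F=F_φ(r,s₁:s_α:s_β) a typical multifan, and L=(F,ru,u,ux,x) a lollipop centered at r with φ(ru)=α+1, φ̄(x)={α+1}, and φ(ux)=Δ. Suppose u is adjacent to s₁ in G and τ:=φ(us₁) is not a Δ-inducing color of F. Then for every (L,φ)-stable coloring φ*∈C^Δ(G−rs₁): φ*(us₁)≠1, and moreover if φ*(us₁)=τ then the edge us₁ lies on the (1,τ)-chain of G−rs₁ containing r under φ* (i.e. us₁∈P_r(1,τ,φ*)). -/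
open SimpleGraph

variable {V : Type*}

/-- A proper edge coloring of `G` with colors in `[1, k]`. -/
structure EdgeColoring (G : SimpleGraph V) (k : ℕ) where
  color : Sym2 V → ℕ
  mem_Icc : ∀ e ∈ G.edgeSet, color e ∈ Set.Icc 1 k
  proper : ∀ u v w : V, G.Adj u v → G.Adj u w → v ≠ w → color s(u, v) ≠ color s(u, w)

namespace EdgeColoring

/-- The set of colors of `[1, k]` missing at `v`. -/
def missing {G : SimpleGraph V} {k : ℕ} (φ : EdgeColoring G k) (v : V) : Set ℕ :=
  {c | c ∈ Set.Icc 1 k ∧ ∀ u, G.Adj v u → φ.color s(v, u) ≠ c}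

end EdgeColoring

/-- A vertex set `X` is `φ`-elementary if the missing-color sets of its vertices are
pairwise disjoint. -/
def Elementary {G : SimpleGraph V} {k : ℕ} (φ : EdgeColoring G k) (X : Set V) : Prop :=
  ∀ x ∈ X, ∀ y ∈ X, x ≠ y → φ.missing x ∩ φ.missing y = ∅

/-- The spanning subgraph consisting of the edges colored `a` or `b`; its connected
components are the `(a, b)`-chains. -/
def chainGraph {G : SimpleGraph V} {k : ℕ} (φ : EdgeColoring G k) (a b : ℕ) :
    SimpleGraph V where
  Adj u v := G.Adj u v ∧ (φ.color s(u, v) = a ∨ φ.color s(u, v) = b)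
  symm := ⟨fun u v h => ⟨h.1.symm, by rw [Sym2.eq_swap]; exact h.2⟩⟩
  loopless := ⟨fun v h => G.loopless.irrefl v h.1⟩

section
variable [Fintype V] [DecidableEq V]

/-- `G` is class 2: there is no proper edge coloring with `Δ = maxDegree` colors. -/
def Class2 (G : SimpleGraph V) [DecidableRel G.Adj] : Prop :=
  IsEmpty (EdgeColoring G G.maxDegree)

/-- `G` is a Hilton–Zhao graph: connected, class 2, and every vertex of maximum degree has
at most two neighbors of maximum degree (`Δ(G_Δ) ≤ 2`). -/
def IsHZ (G : SimpleGraph V) [DecidableRel G.Adj] : Prop :=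
  G.Connected ∧ Class2 G ∧
    ∀ v, G.degree v = G.maxDegree →
      ((G.neighborFinset v).filter fun w => G.degree w = G.maxDegree).card ≤ 2

/-- `s 1, …, s (Δ - 2)` is a labeling (without repetition) of all the `(Δ-1)`-neighbors
of `r`. -/
def NbrLabeling (G : SimpleGraph V) [DecidableRel G.Adj] (r : V) (s : ℕ → V) : Prop :=
  Set.InjOn s (Set.Icc 1 (G.maxDegree - 2)) ∧
  (∀ i ∈ Set.Icc 1 (G.maxDegree - 2), G.Adj r (s i) ∧ G.degree (s i) = G.maxDegree - 1) ∧
  ∀ w, G.Adj r w → G.degree w = G.maxDegree - 1 →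
    ∃ i ∈ Set.Icc 1 (G.maxDegree - 2), w = s i

end

/-- `(r, r(s 1), s 1, r(s 2), s 2, …, r(s p), s p)` is a multifan centered at `r` with
respect to the edge `r(s 1)` and the coloring `φ` (a coloring of `G` minus that edge). -/
def IsMultifanAt {k : ℕ} {H : SimpleGraph V} (φ : EdgeColoring H k)
    (G : SimpleGraph V) (r : V) (s : ℕ → V) (p : ℕ) : Prop :=
  1 ≤ p ∧
  (∀ i ∈ Set.Icc 1 p, G.Adj r (s i) ∧ s i ≠ r) ∧
  Set.InjOn s (Set.Icc 1 p) ∧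
  ∀ i ∈ Set.Icc 2 p, ∃ j ∈ Set.Icc 1 (i - 1), φ.color s(r, s i) ∈ φ.missing (s j)

section
variable [Fintype V] [DecidableEq V]

/-- A multifan in an HZ-graph: additionally, all vertices except the center have degree
`Δ - 1`. -/
def IsHZMultifan {k : ℕ} {H : SimpleGraph V} (φ : EdgeColoring H k)
    (G : SimpleGraph V) [DecidableRel G.Adj] (r : V) (t : ℕ → V) (p : ℕ) : Prop :=
  IsMultifanAt φ G r t p ∧ ∀ i ∈ Set.Icc 1 p, G.degree (t i) = G.maxDegree - 1

/-- The multifan on `r, s 1, …, s p` is maximum at `r`: its number of vertices is maximum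
among all multifans with respect to `rs` and `φ'` over all neighbors `s` of `r` and all
colorings `φ' ∈ C^Δ(G - rs)`. -/
def IsMaximumMultifan (G : SimpleGraph V) [DecidableRel G.Adj] (r : V) (s : ℕ → V) (p : ℕ)
    (φ : EdgeColoring (G.deleteEdges {s(r, s 1)}) G.maxDegree) : Prop :=
  IsHZMultifan φ G r s p ∧
  ∀ (t : ℕ → V) (q : ℕ) (φ' : EdgeColoring (G.deleteEdges {s(r, t 1)}) G.maxDegree),
    IsHZMultifan φ' G r t q → q ≤ p

end

/-- `φ'` is `(F, φ)`-stable for the multifan on `r, s 1, …, s p`: the missing sets at all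
vertices of the fan agree, as do the colors of all (colored) edges of the fan. -/
def MultifanStable {k : ℕ} {H : SimpleGraph V} (φ φ' : EdgeColoring H k)
    (r : V) (s : ℕ → V) (p : ℕ) : Prop :=
  φ'.missing r = φ.missing r ∧
  (∀ i ∈ Set.Icc 1 p, φ'.missing (s i) = φ.missing (s i)) ∧
  ∀ i ∈ Set.Icc 2 p, φ'.color s(r, s i) = φ.color s(r, s i)

section
variable [Fintype V] [DecidableEq V]

/-- `S_φ(r, s 1 : s t : s (Δ - 2))` is a pseudo-multifan: the initial segment up to `s t`
is a maximum multifan, and the whole vertex set is `φ'`-elementary for every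
`(F, φ)`-stable coloring `φ'`. -/
def IsPseudoMultifan (G : SimpleGraph V) [DecidableRel G.Adj] (r : V) (s : ℕ → V) (t : ℕ)
    (φ : EdgeColoring (G.deleteEdges {s(r, s 1)}) G.maxDegree) : Prop :=
  1 ≤ t ∧ t ≤ G.maxDegree - 2 ∧
  IsMaximumMultifan G r s t φ ∧
  ∀ φ' : EdgeColoring (G.deleteEdges {s(r, s 1)}) G.maxDegree,
    MultifanStable φ φ' r s t →
    Elementary φ' ({r} ∪ s '' Set.Icc 1 (G.maxDegree - 2))

/-- The list `l` of vertices forms a rotation with respect to `φ`: distinct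
`(Δ-1)`-neighbors of `r`, φ-elementary, and the edge from `r` to each vertex of the list
is colored with the unique missing color of the previous vertex (cyclically). -/
def IsRotation (G : SimpleGraph V) [DecidableRel G.Adj] {k : ℕ} {H : SimpleGraph V}
    (φ : EdgeColoring H k) (r : V) (l : List V) : Prop :=
  l ≠ [] ∧ l.Nodup ∧
  (∀ v ∈ l, G.Adj r v ∧ G.degree v = G.maxDegree - 1) ∧
  Elementary φ {v | v ∈ l} ∧
  ∀ i : Fin l.length,
    φ.missing (l.get i) =
      {φ.color s(r, l.get ⟨(↑i + 1) % l.length, Nat.mod_lt _ i.pos⟩)}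

/-- A typical multifan `F_φ(r, s 1 : s α : s β)`. -/
def IsTypicalMultifan (G : SimpleGraph V) [DecidableRel G.Adj] (r : V) (s : ℕ → V)
    (α β : ℕ) (φ : EdgeColoring (G.deleteEdges {s(r, s 1)}) G.maxDegree) : Prop :=
  1 ≤ α ∧ α ≤ β ∧ β ≤ G.maxDegree - 2 ∧
  IsMultifanAt φ G r s β ∧
  (∀ i ∈ Set.Icc 1 β, G.degree (s i) = G.maxDegree - 1) ∧
  φ.missing r = {1} ∧
  φ.missing (s 1) = {2, G.maxDegree} ∧
  (∀ i ∈ Set.Icc 2 β, i ≠ α + 1 → φ.color s(r, s i) = i ∧ φ.missing (s i) = {i + 1}) ∧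
  (α < β → φ.color s(r, s (α + 1)) = G.maxDegree ∧ φ.missing (s (α + 1)) = {α + 2})

/-- `L = (F, ru, u, ux, x)` is a lollipop centered at `r` (on top of the typical multifan
with vertices `r, s 1, …, s β`): `u` is a `Δ`-neighbor of `r` and `x` is a
`(Δ-1)`-neighbor of `u` not among `s 1, …, s β`. -/
def IsLollipop (G : SimpleGraph V) [DecidableRel G.Adj] (r : V) (s : ℕ → V) (β : ℕ)
    (u x : V) : Prop :=
  G.Adj r u ∧ G.degree u = G.maxDegree ∧
  G.Adj u x ∧ G.degree x = G.maxDegree - 1 ∧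
  x ≠ r ∧ ∀ i ∈ Set.Icc 1 β, x ≠ s i

end

/-- For a typical multifan `F_φ(r, s 1 : s α : s β)` in an HZ-graph with maximum degree
`Δ`, the `Δ`-inducing colors are `Δ` together with `α + 2, …, β + 1`. -/
def IsDeltaInducingColor (Δ α β c : ℕ) : Prop :=
  c = Δ ∨ c ∈ Set.Icc (α + 2) (β + 1)

/-- For a typical multifan `F_φ(r, s 1 : s α : s β)`, the 2-inducing colors are
`2, 3, …, α + 1`. -/
def Is2InducingColor (α c : ℕ) : Prop :=
  c ∈ Set.Icc 2 (α + 1)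

/-- `φ'` is `(L, φ)`-stable for the lollipop `L = (F, ru, u, ux, x)`. -/
def LollipopStable {k : ℕ} {H : SimpleGraph V} (φ φ' : EdgeColoring H k)
    (r : V) (s : ℕ → V) (β : ℕ) (u x : V) : Prop :=
  MultifanStable φ φ' r s β ∧
  φ'.missing u = φ.missing u ∧ φ'.missing x = φ.missing x ∧
  φ'.color s(r, u) = φ.color s(r, u) ∧ φ'.color s(u, x) = φ.color s(u, x)

/-- `φ'` is obtained from `φ` by a single Kempe change on the `(a, b)`-chain containing
the vertex `z`: colors `a` and `b` are interchanged on that chain and all other edges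
keep their colors. -/
def KempeChangeAt {k : ℕ} {H : SimpleGraph V} (φ φ' : EdgeColoring H k) (a b : ℕ)
    (z : V) : Prop :=
  (∀ u v : V, H.Adj u v →
    ((chainGraph φ a b).Reachable z u ∨ (chainGraph φ a b).Reachable z v) →
    φ'.color s(u, v) =
      if φ.color s(u, v) = a then b
      else if φ.color s(u, v) = b then a
      else φ.color s(u, v)) ∧
  (∀ u v : V, H.Adj u v →
    ¬(chainGraph φ a b).Reachable z u → ¬(chainGraph φ a b).Reachable z v →
    φ'.color s(u, v) = φ.color s(u, v))

/-- `v` is an endvertex of the `(a, b)`-chain (in the chain graph `C`) containing `z`: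
it belongs to that chain and has at most one neighbor on it. -/
def IsChainEnd (C : SimpleGraph V) (z v : V) : Prop :=
  C.Reachable z v ∧ ∀ w₁ w₂ : V, C.Adj v w₁ → C.Adj v w₂ → w₁ = w₂

/-- `l` is the index list of an `a`-inducing sequence `s_{ℓ 1}, …, s_{ℓ h}` of the
multifan on `r, s 1, …, s p`. -/
def IsInducingSeq {k : ℕ} {H : SimpleGraph V} (φ : EdgeColoring H k) (r : V) (s : ℕ → V)
    (p a : ℕ) (l : List ℕ) : Prop :=
  (∀ i ∈ l, i ∈ Set.Icc 2 p) ∧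
  l.Chain' (· < ·) ∧
  (∀ h : l ≠ [], φ.color s(r, s (l.head h)) = a) ∧
  l.Chain' (fun i j => φ.color s(r, s j) ∈ φ.missing (s i))

/-- The color `c` is induced by `a` (an `a`-inducing color): either `c = a` or `c` is
missing at a vertex of some `a`-inducing sequence. -/
def InducedBy {k : ℕ} {H : SimpleGraph V} (φ : EdgeColoring H k) (r : V) (s : ℕ → V)
    (p a c : ℕ) : Prop :=
  c = a ∨ ∃ l, IsInducingSeq φ r s p a l ∧ ∃ i ∈ l, c ∈ φ.missing (s i)

/-- The order `δ ≺ lam` on `a`-inducing colors. -/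
def ColorPrec {k : ℕ} {H : SimpleGraph V} (φ : EdgeColoring H k) (r : V) (s : ℕ → V)
    (p a δ lam : ℕ) : Prop :=
  (δ = a ∧ ∃ l, IsInducingSeq φ r s p a l ∧ ∃ i ∈ l, lam ∈ φ.missing (s i)) ∨
  ∃ l, IsInducingSeq φ r s p a l ∧ ∃ i j : Fin l.length, i < j ∧
    δ ∈ φ.missing (s (l.get i)) ∧ lam ∈ φ.missing (s (l.get j))

namespace HZAux

open SimpleGraph

variable {V : Type*}

/-! ### Color swapping -/

def swapColor (a b c : ℕ) : ℕ := if c = a then b else if c = b then a else c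

lemma swapColor_left (a b : ℕ) : swapColor a b a = b := by simp [swapColor]

lemma swapColor_right (a b : ℕ) : swapColor a b b = a := by
  unfold swapColor; split_ifs with h <;> omega

lemma swapColor_of_ne {a b c : ℕ} (h1 : c ≠ a) (h2 : c ≠ b) : swapColor a b c = c := by
  simp [swapColor, h1, h2]

lemma swapColor_swapColor (a b c : ℕ) : swapColor a b (swapColor a b c) = c := by
  unfold swapColor; split_ifs <;> omega

lemma swapColor_inj {a b c d : ℕ} (h : swapColor a b c = swapColor a b d) : c = d := by
  have := swapColor_swapColor a b c
  rw [h, swapColor_swapColor] at this; exact this.symm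

lemma swapColor_mem_Icc {k a b c : ℕ} (ha : a ∈ Set.Icc 1 k) (hb : b ∈ Set.Icc 1 k)
    (hc : c ∈ Set.Icc 1 k) : swapColor a b c ∈ Set.Icc 1 k := by
  simp only [Set.mem_Icc] at *; unfold swapColor; split_ifs <;> omega

lemma swapColor_mem_Icc_iff {k a b c : ℕ} (ha : a ∈ Set.Icc 1 k) (hb : b ∈ Set.Icc 1 k) :
    swapColor a b c ∈ Set.Icc 1 k ↔ c ∈ Set.Icc 1 k := by
  constructor
  · intro h
    have := swapColor_mem_Icc ha hb h
    rwa [swapColor_swapColor] at this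
  · exact swapColor_mem_Icc ha hb

/-! ### Generic edge-coloring helpers -/

lemma missing_mem_Icc {k : ℕ} {H : SimpleGraph V} {φ : EdgeColoring H k} {v : V} {c : ℕ}
    (h : c ∈ φ.missing v) : c ∈ Set.Icc 1 k := h.1

lemma missing_ne {k : ℕ} {H : SimpleGraph V} {φ : EdgeColoring H k} {v w : V} {c : ℕ}
    (h : c ∈ φ.missing v) (hadj : H.Adj v w) : φ.color s(v, w) ≠ c := h.2 w hadj

lemma mem_missing {k : ℕ} {H : SimpleGraph V} {φ : EdgeColoring H k} {v : V} {c : ℕ}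
    (h1 : c ∈ Set.Icc 1 k) (h2 : ∀ w, H.Adj v w → φ.color s(v, w) ≠ c) :
    c ∈ φ.missing v := ⟨h1, h2⟩

/-- Contrapositive of properness. -/
lemma proper_eq {k : ℕ} {H : SimpleGraph V} (φ : EdgeColoring H k) {v w₁ w₂ : V}
    (h1 : H.Adj v w₁) (h2 : H.Adj v w₂) (h : φ.color s(v, w₁) = φ.color s(v, w₂)) :
    w₁ = w₂ := by
  by_contra hne; exact φ.proper v w₁ w₂ h1 h2 hne h

lemma color_comm {k : ℕ} {H : SimpleGraph V} (φ : EdgeColoring H k) (v w : V) :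
    φ.color s(v, w) = φ.color s(w, v) := by rw [Sym2.eq_swap]

/-! ### Kempe swaps -/

section Kempe

open scoped Classical

variable {k : ℕ} {H : SimpleGraph V} (ψ : EdgeColoring H k) (a b : ℕ) (z : V)

open Classical in
/-- The coloring obtained from `ψ` by interchanging `a` and `b` on the `(a,b)`-chain
containing `z`. -/
noncomputable def kempe (ha : a ∈ Set.Icc 1 k) (hb : b ∈ Set.Icc 1 k) :
    EdgeColoring H k where
  color := fun e =>
    if ∃ w ∈ e, (chainGraph ψ a b).Reachable z w
    then swapColor a b (ψ.color e) else ψ.color e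
  mem_Icc := by
    intro e he
    split_ifs
    · exact swapColor_mem_Icc ha hb (ψ.mem_Icc _ he)
    · exact ψ.mem_Icc _ he
  proper := by
    intro v w₁ w₂ h1 h2 hne
    have hcond : ∀ u u' : V, (∃ w ∈ s(u, u'), (chainGraph ψ a b).Reachable z w) ↔
        ((chainGraph ψ a b).Reachable z u ∨ (chainGraph ψ a b).Reachable z u') := by
      intro u u'
      constructor
      · rintro ⟨w, hw, hr⟩
        rw [Sym2.mem_iff] at hw
        rcases hw with rfl | rfl
        · exact Or.inl hr
        · exact Or.inr hr
      · rintro (hr | hr)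
        · exact ⟨_, Sym2.mem_mk_left _ _, hr⟩
        · exact ⟨_, Sym2.mem_mk_right _ _, hr⟩
    simp only [hcond]
    by_cases hzv : (chainGraph ψ a b).Reachable z v
    · rw [if_pos (Or.inl hzv), if_pos (Or.inl hzv)]
      intro h
      exact ψ.proper v w₁ w₂ h1 h2 hne (swapColor_inj h)
    · have key : ∀ w, H.Adj v w →
          (if (chainGraph ψ a b).Reachable z v ∨ (chainGraph ψ a b).Reachable z w
            then swapColor a b (ψ.color s(v, w)) else ψ.color s(v, w)) = ψ.color s(v, w) := by
        intro w hw
        by_cases hzw : (chainGraph ψ a b).Reachable z w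
        · rw [if_pos (Or.inr hzw)]
          have hne1 : ψ.color s(v, w) ≠ a := by
            intro hc
            apply hzv
            have hadj : (chainGraph ψ a b).Adj w v :=
              ⟨hw.symm, by rw [Sym2.eq_swap]; exact Or.inl hc⟩
            exact hzw.trans hadj.reachable
          have hne2 : ψ.color s(v, w) ≠ b := by
            intro hc
            apply hzv
            have hadj : (chainGraph ψ a b).Adj w v :=
              ⟨hw.symm, by rw [Sym2.eq_swap]; exact Or.inr hc⟩
            exact hzw.trans hadj.reachable
          exact swapColor_of_ne hne1 hne2
        · rw [if_neg (by tauto)]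
      rw [key w₁ h1, key w₂ h2]
      exact ψ.proper v w₁ w₂ h1 h2 hne

variable {ha : a ∈ Set.Icc 1 k} {hb : b ∈ Set.Icc 1 k}

lemma kempe_color (u v : V) :
    (kempe ψ a b z ha hb).color s(u, v) =
      if (chainGraph ψ a b).Reachable z u ∨ (chainGraph ψ a b).Reachable z v
      then swapColor a b (ψ.color s(u, v)) else ψ.color s(u, v) := by
  have hcond : (∃ w ∈ s(u, v), (chainGraph ψ a b).Reachable z w) ↔
      ((chainGraph ψ a b).Reachable z u ∨ (chainGraph ψ a b).Reachable z v) := by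
    constructor
    · rintro ⟨w, hw, hr⟩
      rw [Sym2.mem_iff] at hw
      rcases hw with rfl | rfl
      · exact Or.inl hr
      · exact Or.inr hr
    · rintro (hr | hr)
      · exact ⟨_, Sym2.mem_mk_left _ _, hr⟩
      · exact ⟨_, Sym2.mem_mk_right _ _, hr⟩
  show (if ∃ w ∈ s(u,v), (chainGraph ψ a b).Reachable z w
    then swapColor a b (ψ.color s(u,v)) else ψ.color s(u,v)) = _
  rw [if_congr hcond rfl rfl]

lemma kempe_color_of_ne {u v : V} (h1 : ψ.color s(u, v) ≠ a) (h2 : ψ.color s(u, v) ≠ b) :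
    (kempe ψ a b z ha hb).color s(u, v) = ψ.color s(u, v) := by
  rw [kempe_color]; split_ifs
  · exact swapColor_of_ne h1 h2
  · rfl

lemma kempe_color_of_reach {u v : V} (h : (chainGraph ψ a b).Reachable z u) :
    (kempe ψ a b z ha hb).color s(u, v) = swapColor a b (ψ.color s(u, v)) := by
  rw [kempe_color, if_pos (Or.inl h)]

lemma kempe_color_of_not_reach {u v : V} (hu : ¬ (chainGraph ψ a b).Reachable z u)
    (hadj : H.Adj u v) :
    (kempe ψ a b z ha hb).color s(u, v) = ψ.color s(u, v) := by
  rw [kempe_color]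
  by_cases hv : (chainGraph ψ a b).Reachable z v
  · rw [if_pos (Or.inr hv)]
    have hne1 : ψ.color s(u, v) ≠ a := by
      intro hc
      apply hu
      have hadj' : (chainGraph ψ a b).Adj v u :=
        ⟨hadj.symm, by rw [Sym2.eq_swap]; exact Or.inl hc⟩
      exact hv.trans hadj'.reachable
    have hne2 : ψ.color s(u, v) ≠ b := by
      intro hc
      apply hu
      have hadj' : (chainGraph ψ a b).Adj v u :=
        ⟨hadj.symm, by rw [Sym2.eq_swap]; exact Or.inr hc⟩
      exact hv.trans hadj'.reachable
    exact swapColor_of_ne hne1 hne2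
  · rw [if_neg (by tauto)]

lemma kempe_missing_of_not_reach {v : V} (h : ¬ (chainGraph ψ a b).Reachable z v) :
    (kempe ψ a b z ha hb).missing v = ψ.missing v := by
  ext c
  show _ ∈ Set.Icc 1 k ∧ _ ↔ _ ∈ Set.Icc 1 k ∧ _
  constructor <;> rintro ⟨hc, hall⟩ <;> refine ⟨hc, fun w hw => ?_⟩
  · have := hall w hw
    rwa [kempe_color_of_not_reach ψ a b z h hw] at this
  · rw [kempe_color_of_not_reach ψ a b z h hw]
    exact hall w hw

lemma kempe_mem_missing_of_reach {v : V} (h : (chainGraph ψ a b).Reachable z v) (c : ℕ) :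
    c ∈ (kempe ψ a b z ha hb).missing v ↔ swapColor a b c ∈ ψ.missing v := by
  constructor <;> rintro ⟨hc, hall⟩
  · refine ⟨swapColor_mem_Icc ha hb hc, fun w hw => ?_⟩
    have := hall w hw
    rw [kempe_color_of_reach ψ a b z h] at this
    intro hcontra
    exact this (by rw [hcontra, swapColor_swapColor])
  · refine ⟨(swapColor_mem_Icc_iff ha hb).mp hc, fun w hw => ?_⟩
    rw [kempe_color_of_reach ψ a b z h]
    intro hcontra
    exact hall w hw (by rw [← hcontra, swapColor_swapColor])

lemma kempe_missing_of_fixed {v : V}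
    (hM : ∀ m ∈ ψ.missing v, m ≠ a ∧ m ≠ b) :
    (kempe ψ a b z ha hb).missing v = ψ.missing v := by
  by_cases h : (chainGraph ψ a b).Reachable z v
  · ext c
    rw [kempe_mem_missing_of_reach ψ a b z h]
    constructor
    · intro hm
      have h1 : c ≠ a := by
        rintro rfl
        rw [swapColor_left] at hm
        exact (hM b hm).2 rfl
      have h2 : c ≠ b := by
        rintro rfl
        rw [swapColor_right] at hm
        exact (hM a hm).1 rfl
      rwa [swapColor_of_ne h1 h2] at hm
    · intro hm
      rwa [swapColor_of_ne (hM c hm).1 (hM c hm).2]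
  · exact kempe_missing_of_not_reach ψ a b z h

end Kempe

/-! ### Walks in graphs of maximum degree two -/

section Walks

variable {C : SimpleGraph V}

lemma reach_closed {S : Set V} (hS : ∀ a ∈ S, ∀ b, C.Adj a b → b ∈ S) :
    ∀ {x y : V}, x ∈ S → C.Reachable x y → y ∈ S := by
  intro x y hx h
  obtain ⟨p⟩ := h
  induction p with
  | nil => exact hx
  | cons h q ih => exact ih (hS _ hx _ h)

lemma interior_neighbors :
    ∀ {v w : V} (p : C.Walk v w), p.IsPath → ∀ y ∈ p.support, y ≠ v → y ≠ w →
      ∃ n₁ n₂, n₁ ≠ n₂ ∧ C.Adj y n₁ ∧ C.Adj y n₂ ∧ n₁ ∈ p.support ∧ n₂ ∈ p.support := by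
  intro v w p
  induction p with
  | nil =>
    intro _ y hy hyv _
    rw [SimpleGraph.Walk.support_nil, List.mem_singleton] at hy
    exact absurd hy hyv
  | @cons v v' w h q ih =>
    intro hp y hy hyv hyw
    rw [SimpleGraph.Walk.support_cons, List.mem_cons] at hy
    rcases hy with rfl | hy
    · exact absurd rfl hyv
    by_cases hyv' : y = v'
    · subst hyv'
      cases q with
      | nil => exact absurd rfl hyw
      | @cons _ z _ h' q' =>
        refine ⟨v, z, ?_, h.symm, h', ?_, ?_⟩
        · intro hvz
          have hnotin := (((SimpleGraph.Walk.cons_isPath_iff _ _).mp hp)).2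
          apply hnotin
          rw [hvz, SimpleGraph.Walk.support_cons, List.mem_cons]
          exact Or.inr (SimpleGraph.Walk.start_mem_support q')
        · rw [SimpleGraph.Walk.support_cons, List.mem_cons]
          exact Or.inl rfl
        · rw [SimpleGraph.Walk.support_cons, List.mem_cons]
          right
          rw [SimpleGraph.Walk.support_cons, List.mem_cons]
          right
          exact SimpleGraph.Walk.start_mem_support q'
    · obtain ⟨n₁, n₂, hne, a₁, a₂, m₁, m₂⟩ :=
        ih (((SimpleGraph.Walk.cons_isPath_iff _ _).mp hp)).1 y hy hyv' hyw
      refine ⟨n₁, n₂, hne, a₁, a₂, ?_, ?_⟩ <;>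
        rw [SimpleGraph.Walk.support_cons, List.mem_cons] <;> exact Or.inr ‹_›

lemma start_closed {v w : V} (p : C.Walk v w) (hvw : v ≠ w)
    (hv : ∀ w₁ w₂, C.Adj v w₁ → C.Adj v w₂ → w₁ = w₂) {z : V} (hz : C.Adj v z) :
    z ∈ p.support := by
  cases p with
  | nil => exact absurd rfl hvw
  | cons h q =>
    have := hv _ _ hz h
    subst this
    rw [SimpleGraph.Walk.support_cons, List.mem_cons]
    exact Or.inr (SimpleGraph.Walk.start_mem_support q)

lemma path_closed {v w : V} (p : C.Walk v w) (hp : p.IsPath) (hvw : v ≠ w)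
    (hv : ∀ w₁ w₂, C.Adj v w₁ → C.Adj v w₂ → w₁ = w₂)
    (hw : ∀ w₁ w₂, C.Adj w w₁ → C.Adj w w₂ → w₁ = w₂)
    (hdeg : ∀ y z₁ z₂ z₃, C.Adj y z₁ → C.Adj y z₂ → C.Adj y z₃ → z₁ = z₂ ∨ z₁ = z₃ ∨ z₂ = z₃) :
    ∀ y ∈ p.support, ∀ z, C.Adj y z → z ∈ p.support := by
  intro y hy z hz
  by_cases hyv : y = v
  · subst hyv; exact start_closed p hvw hv hz
  by_cases hyw : y = w
  · subst hyw
    have := start_closed p.reverse (Ne.symm hvw) hw hz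
    rwa [SimpleGraph.Walk.support_reverse, List.mem_reverse] at this
  obtain ⟨n₁, n₂, hne, a₁, a₂, m₁, m₂⟩ := interior_neighbors p hp y hy hyv hyw
  rcases hdeg y z n₁ n₂ hz a₁ a₂ with rfl | rfl | h
  · exact m₁
  · exact m₂
  · exact absurd h hne

lemma three_ends [DecidableEq V]
    (hdeg : ∀ y z₁ z₂ z₃, C.Adj y z₁ → C.Adj y z₂ → C.Adj y z₃ → z₁ = z₂ ∨ z₁ = z₃ ∨ z₂ = z₃)
    {a b c : V} (hab : a ≠ b) (hac : a ≠ c) (hbc : b ≠ c)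
    (ha : ∀ w₁ w₂, C.Adj a w₁ → C.Adj a w₂ → w₁ = w₂)
    (hb : ∀ w₁ w₂, C.Adj b w₁ → C.Adj b w₂ → w₁ = w₂)
    (hc : ∀ w₁ w₂, C.Adj c w₁ → C.Adj c w₂ → w₁ = w₂)
    (h1 : C.Reachable b a) (h2 : C.Reachable b c) : False := by
  obtain ⟨q⟩ := h2
  set p := q.bypass with hpdef
  have hp : p.IsPath := SimpleGraph.Walk.bypass_isPath q
  have hclosed : ∀ y ∈ p.support, ∀ z, C.Adj y z → z ∈ p.support :=
    path_closed p hp hbc hb hc hdeg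
  have haS : a ∈ p.support := by
    refine reach_closed (S := {v | v ∈ p.support}) ?_ (SimpleGraph.Walk.start_mem_support p) h1
    intro y hy z hz
    exact hclosed y hy z hz
  obtain ⟨n₁, n₂, hne, a₁, a₂, _, _⟩ :=
    interior_neighbors p hp a haS hab hac
  exact hne (ha _ _ a₁ a₂)

end Walks

/-! ### Chain graph degrees -/

section ChainDeg

variable {k : ℕ} {H : SimpleGraph V} (ψ : EdgeColoring H k) (a b : ℕ)

lemma chain_deg_le_two (y z₁ z₂ z₃ : V) (h1 : (chainGraph ψ a b).Adj y z₁)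
    (h2 : (chainGraph ψ a b).Adj y z₂) (h3 : (chainGraph ψ a b).Adj y z₃) :
    z₁ = z₂ ∨ z₁ = z₃ ∨ z₂ = z₃ := by
  by_contra hcon
  push_neg at hcon
  obtain ⟨e12, e13, e23⟩ := hcon
  have d12 := ψ.proper y z₁ z₂ h1.1 h2.1 e12
  have d13 := ψ.proper y z₁ z₃ h1.1 h3.1 e13
  have d23 := ψ.proper y z₂ z₃ h2.1 h3.1 e23
  rcases h1.2 with hA | hA <;> rcases h2.2 with hB | hB <;> rcases h3.2 with hC | hC <;>
    simp_all

lemma chain_end_unique {v : V} (hm : a ∈ ψ.missing v ∨ b ∈ ψ.missing v) (w₁ w₂ : V)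
    (h1 : (chainGraph ψ a b).Adj v w₁) (h2 : (chainGraph ψ a b).Adj v w₂) : w₁ = w₂ := by
  apply proper_eq ψ h1.1 h2.1
  rcases hm with hm | hm
  · have e1 : ψ.color s(v, w₁) = b := (h1.2.resolve_left (missing_ne hm h1.1))
    have e2 : ψ.color s(v, w₂) = b := (h2.2.resolve_left (missing_ne hm h2.1))
    rw [e1, e2]
  · have e1 : ψ.color s(v, w₁) = a := (h1.2.resolve_right (missing_ne hm h1.1))
    have e2 : ψ.color s(v, w₂) = a := (h2.2.resolve_right (missing_ne hm h2.1))
    rw [e1, e2]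

end ChainDeg

/-! ### Extending a coloring to all of `G`: the contradiction machine -/

section Extend

variable [Fintype V] [DecidableEq V] {G : SimpleGraph V} [DecidableRel G.Adj]

open Classical in
lemma extend_contra (hC : Class2 G) {r : V} {s : ℕ → V} {t : ℕ} (ht : 1 ≤ t)
    (hinj : ∀ i, 1 ≤ i → i ≤ t → ∀ j, 1 ≤ j → j ≤ t → s i = s j → i = j)
    (hadj : ∀ i, 1 ≤ i → i ≤ t → G.Adj r (s i) ∧ s i ≠ r)
    (ψ : EdgeColoring (G.deleteEdges {s(r, s 1)}) G.maxDegree)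
    (c : ℕ → ℕ)
    (hc : ∀ i, 1 ≤ i → i ≤ t → c i ∈ ψ.missing (s i))
    (hct : c t ∈ ψ.missing r)
    (hcc : ∀ i, 1 ≤ i → i < t → c i = ψ.color s(r, s (i + 1))) : False := by
  have pair : ∀ {v w : V} {i : ℕ}, s(v, w) = s(r, s i) →
      (v = r ∧ w = s i) ∨ (v = s i ∧ w = r) := by
    intro v w i h
    exact Sym2.eq_iff.mp h
  have Hadj : ∀ {v w : V}, G.Adj v w → s(v, w) ≠ s(r, s 1) →
      (G.deleteEdges {s(r, s 1)}).Adj v w := by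
    intro v w h hne
    rw [SimpleGraph.deleteEdges_adj]
    exact ⟨h, by simpa using hne⟩
  have Hrs : ∀ i, 2 ≤ i → i ≤ t → (G.deleteEdges {s(r, s 1)}).Adj r (s i) := by
    intro i h2 hit
    refine Hadj (hadj i (by omega) hit).1 ?_
    intro hcon
    rcases pair hcon with ⟨_, hsi⟩ | ⟨hri, _⟩
    · have := hinj i (by omega) hit 1 le_rfl ht hsi
      omega
    · exact (hadj 1 le_rfl ht).2 hri.symm
  -- the new coloring
  set χ : Sym2 V → ℕ := fun e =>
    if h : ∃ i, (1 ≤ i ∧ i ≤ t) ∧ e = s(r, s i) then c h.choose else ψ.color e with hχdef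
  have eval₁ : ∀ i, 1 ≤ i → i ≤ t → χ s(r, s i) = c i := by
    intro i h1 h2
    have hex : ∃ j, (1 ≤ j ∧ j ≤ t) ∧ s(r, s i) = s(r, s j) := ⟨i, ⟨h1, h2⟩, rfl⟩
    rw [hχdef]
    dsimp only
    rw [dif_pos hex]
    obtain ⟨⟨hj1, hj2⟩, heq⟩ := hex.choose_spec
    rcases pair heq.symm with ⟨_, hsi⟩ | ⟨_, hcr⟩
    · rw [hinj _ hj1 hj2 _ h1 h2 hsi]
    · exact absurd hcr (hadj _ hj1 hj2).2
  have eval₂ : ∀ e : Sym2 V, (∀ i, 1 ≤ i → i ≤ t → e ≠ s(r, s i)) → χ e = ψ.color e := by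
    intro e he
    rw [hχdef]
    dsimp only
    rw [dif_neg]
    rintro ⟨i, ⟨h1, h2⟩, heq⟩
    exact he i h1 h2 heq
  -- c i is distinct from the ψ-colors of non-fan edges at r
  have hcr : ∀ i, 1 ≤ i → i ≤ t → ∀ w, G.Adj r w → (∀ j, 1 ≤ j → j ≤ t → w ≠ s j) →
      c i ≠ ψ.color s(r, w) := by
    intro i h1 h2 w hw hwj
    have hHrw : (G.deleteEdges {s(r, s 1)}).Adj r w := by
      refine Hadj hw ?_
      intro hcon
      rcases pair hcon with ⟨_, hw1⟩ | ⟨hr1, _⟩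
      · exact hwj 1 le_rfl ht hw1
      · exact (hadj 1 le_rfl ht).2 hr1.symm
    rcases eq_or_lt_of_le h2 with rfl | hlt
    · exact (missing_ne hct hHrw).symm
    · rw [hcc i h1 hlt]
      intro hcon
      have := proper_eq ψ (Hrs (i+1) (by omega) (by omega)) hHrw hcon
      exact hwj (i+1) (by omega) (by omega) this.symm
  -- the c i are pairwise distinct
  have hcrc : ∀ i j, 1 ≤ i → i ≤ t → 1 ≤ j → j ≤ t → i ≠ j → c i ≠ c j := by
    have key : ∀ i j, 1 ≤ i → i < j → j ≤ t → c i ≠ c j := by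
      intro i j h1 hij hjt
      rcases eq_or_lt_of_le hjt with rfl | hlt
      · rw [hcc i h1 hij]
        exact missing_ne hct (Hrs (i+1) (by omega) (by omega))
      · rw [hcc i h1 (by omega), hcc j (by omega) hlt]
        intro hcon
        have := proper_eq ψ (Hrs (i+1) (by omega) (by omega))
          (Hrs (j+1) (by omega) (by omega)) hcon
        have := hinj _ (by omega) (by omega) _ (by omega) (by omega) this
        omega
    intro i j h1 h2 h3 h4 hne
    rcases lt_or_gt_of_ne hne with hlt | hlt
    · exact key i j h1 hlt h4
    · exact (key j i h3 hlt h2).symm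
  -- build the coloring of G
  have hmem : ∀ e ∈ G.edgeSet, χ e ∈ Set.Icc 1 G.maxDegree := by
    intro e he
    by_cases hP : ∃ i, (1 ≤ i ∧ i ≤ t) ∧ e = s(r, s i)
    · obtain ⟨i, ⟨h1, h2⟩, rfl⟩ := hP
      rw [eval₁ i h1 h2]
      exact missing_mem_Icc (hc i h1 h2)
    · push_neg at hP
      rw [eval₂ e (fun i h1 h2 => hP i ⟨h1, h2⟩)]
      refine ψ.mem_Icc e ?_
      rw [SimpleGraph.edgeSet_deleteEdges]
      refine ⟨he, ?_⟩
      simpa using hP 1 ⟨le_rfl, ht⟩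
  have hproper : ∀ v w₁ w₂ : V, G.Adj v w₁ → G.Adj v w₂ → w₁ ≠ w₂ →
      χ s(v, w₁) ≠ χ s(v, w₂) := by
    intro v w₁ w₂ hv1 hv2 hne
    have mixed : ∀ y₁ y₂ : V, G.Adj v y₁ → G.Adj v y₂ → y₁ ≠ y₂ →
        (∃ i, (1 ≤ i ∧ i ≤ t) ∧ s(v, y₁) = s(r, s i)) →
        (¬ ∃ i, (1 ≤ i ∧ i ≤ t) ∧ s(v, y₂) = s(r, s i)) →
        χ s(v, y₁) ≠ χ s(v, y₂) := by
      rintro y₁ y₂ hvy1 hvy2 hney ⟨i, ⟨h1, h2⟩, hei⟩ ho2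
      push_neg at ho2
      rw [hei, eval₁ i h1 h2, eval₂ _ (fun j hj1 hj2 => ho2 j ⟨hj1, hj2⟩)]
      rcases pair hei with ⟨rfl, rfl⟩ | ⟨hv, hy⟩
      · -- v = r, y₁ = s i
        refine hcr i h1 h2 y₂ hvy2 ?_
        intro j hj1 hj2 hcon
        exact ho2 j ⟨hj1, hj2⟩ (by rw [hcon])
      · -- v = s i, y₁ = r
        subst hv
        have hHadj : (G.deleteEdges {s(r, s 1)}).Adj (s i) y₂ := by
          refine Hadj hvy2 ?_
          intro hcon
          rcases pair hcon with ⟨hsir, _⟩ | ⟨_, hy2r⟩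
          · exact (hadj i h1 h2).2 hsir
          · exact hney (hy.trans hy2r.symm)
        exact (missing_ne (hc i h1 h2) hHadj).symm
    by_cases o₁ : ∃ i, (1 ≤ i ∧ i ≤ t) ∧ s(v, w₁) = s(r, s i) <;>
      by_cases o₂ : ∃ i, (1 ≤ i ∧ i ≤ t) ∧ s(v, w₂) = s(r, s i)
    · obtain ⟨i, ⟨hi1, hi2⟩, hei⟩ := o₁
      obtain ⟨j, ⟨hj1, hj2⟩, hej⟩ := o₂
      rw [hei, eval₁ i hi1 hi2, hej, eval₁ j hj1 hj2]
      rcases pair hei with ⟨hvr, hw1⟩ | ⟨hvi, hw1⟩ <;>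
        rcases pair hej with ⟨hvr', hw2⟩ | ⟨hvj, hw2⟩
      · refine hcrc i j hi1 hi2 hj1 hj2 ?_
        intro hcon
        subst hcon
        exact hne (hw1.trans hw2.symm)
      · exact absurd (hvj.symm.trans hvr) (hadj j hj1 hj2).2
      · exact absurd (hvi.symm.trans hvr') (hadj i hi1 hi2).2
      · exact absurd (hw1.trans hw2.symm) hne
    · exact mixed w₁ w₂ hv1 hv2 hne o₁ o₂
    · exact (mixed w₂ w₁ hv2 hv1 hne.symm o₂ o₁).symm
    · push_neg at o₁ o₂
      have h1 := Hadj hv1 (by simpa using o₁ 1 ⟨le_rfl, ht⟩)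
      have h2 := Hadj hv2 (by simpa using o₂ 1 ⟨le_rfl, ht⟩)
      rw [eval₂ _ (fun j hj1 hj2 => o₁ j ⟨hj1, hj2⟩),
        eval₂ _ (fun j hj1 hj2 => o₂ j ⟨hj1, hj2⟩)]
      exact ψ.proper v w₁ w₂ h1 h2 hne
  exact hC.false ⟨χ, hmem, hproper⟩

end Extend

/-! ### The standing context -/

section Main

variable [Fintype V] [DecidableEq V]

/-- All the facts about the lollipop configuration that are preserved by the relevant
Kempe changes. -/
structure Ctx (G : SimpleGraph V) [DecidableRel G.Adj] (r : V) (s : ℕ → V) (α β : ℕ)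
    (u x : V) (ψ : EdgeColoring (G.deleteEdges {s(r, s 1)}) G.maxDegree) : Prop where
  hC : Class2 G
  hΔ : 3 ≤ G.maxDegree
  hα1 : 1 ≤ α
  hαβ : α ≤ β
  hβΔ : β + 2 ≤ G.maxDegree
  hinj : ∀ i, 1 ≤ i → i ≤ β → ∀ j, 1 ≤ j → j ≤ β → s i = s j → i = j
  hadjr : ∀ i, 1 ≤ i → i ≤ β → G.Adj r (s i) ∧ s i ≠ r
  hur : G.Adj r u
  hux : G.Adj u x
  hus1 : G.Adj u (s 1)
  hune : ∀ i, 1 ≤ i → i ≤ β → u ≠ s i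
  hxne : ∀ i, 1 ≤ i → i ≤ β → x ≠ s i
  hxr : x ≠ r
  mr : ψ.missing r = {1}
  ms1 : ψ.missing (s 1) = {2, G.maxDegree}
  msi : ∀ i, 2 ≤ i → i ≤ β → i ≠ α + 1 → ψ.missing (s i) = {i + 1}
  msa : α < β → ψ.missing (s (α + 1)) = {α + 2}
  mx : ψ.missing x = {α + 1}
  crs : ∀ i, 2 ≤ i → i ≤ β → i ≠ α + 1 → ψ.color s(r, s i) = i
  crsa : α < β → ψ.color s(r, s (α + 1)) = G.maxDegree
  cru : ψ.color s(r, u) = α + 1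
  cux : ψ.color s(u, x) = G.maxDegree

namespace Ctx

variable {G : SimpleGraph V} [DecidableRel G.Adj] {r : V} {s : ℕ → V} {α β : ℕ} {u x : V}
  {ψ : EdgeColoring (G.deleteEdges {s(r, s 1)}) G.maxDegree}

lemma hβ1 (h : Ctx G r s α β u x ψ) : 1 ≤ β := le_trans h.hα1 h.hαβ

lemma hs1r (h : Ctx G r s α β u x ψ) : s 1 ≠ r := (h.hadjr 1 le_rfl h.hβ1).2

lemma hus1ne (h : Ctx G r s α β u x ψ) : u ≠ s 1 := h.hune 1 le_rfl h.hβ1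

lemma hunr (h : Ctx G r s α β u x ψ) : u ≠ r := h.hur.ne'

lemma huxne (h : Ctx G r s α β u x ψ) : u ≠ x := h.hux.ne

lemma Hur (h : Ctx G r s α β u x ψ) : (G.deleteEdges {s(r, s 1)}).Adj r u := by
  rw [SimpleGraph.deleteEdges_adj]
  refine ⟨h.hur, ?_⟩
  simp only [Set.mem_singleton_iff]
  intro hc
  rcases Sym2.eq_iff.mp hc with ⟨_, hu⟩ | ⟨hr, _⟩
  · exact h.hus1ne hu
  · exact h.hs1r hr.symm

lemma Hus1 (h : Ctx G r s α β u x ψ) : (G.deleteEdges {s(r, s 1)}).Adj u (s 1) := by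
  rw [SimpleGraph.deleteEdges_adj]
  refine ⟨h.hus1, ?_⟩
  simp only [Set.mem_singleton_iff]
  intro hc
  rcases Sym2.eq_iff.mp hc with ⟨hu, _⟩ | ⟨hu, hs⟩
  · exact h.hunr hu
  · exact h.hs1r hs

lemma Hux (h : Ctx G r s α β u x ψ) : (G.deleteEdges {s(r, s 1)}).Adj u x := by
  rw [SimpleGraph.deleteEdges_adj]
  refine ⟨h.hux, ?_⟩
  simp only [Set.mem_singleton_iff]
  intro hc
  rcases Sym2.eq_iff.mp hc with ⟨hu, _⟩ | ⟨hu, _⟩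
  · exact h.hunr hu
  · exact h.hus1ne hu

lemma Hrs (h : Ctx G r s α β u x ψ) : ∀ i, 2 ≤ i → i ≤ β → (G.deleteEdges {s(r, s 1)}).Adj r (s i) := by
  intro i h2 hβ
  rw [SimpleGraph.deleteEdges_adj]
  refine ⟨(h.hadjr i (by omega) hβ).1, ?_⟩
  simp only [Set.mem_singleton_iff]
  intro hc
  rcases Sym2.eq_iff.mp hc with ⟨_, hs⟩ | ⟨hr, _⟩
  · have := h.hinj i (by omega) hβ 1 le_rfl h.hβ1 hs
    omega
  · exact h.hs1r.symm hr

lemma hαs (h : Ctx G r s α β u x ψ) : α + 1 ∈ ψ.missing (s α) := by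
  rcases eq_or_lt_of_le h.hα1 with rfl | hα2
  · rw [h.ms1]
    exact Set.mem_insert _ _
  · rw [h.msi α (by omega) h.hαβ (by omega)]
    rfl

end Ctx

/-! ### No common missing color at `r` and `s 1`, and no separated chains -/

lemma no_common {G : SimpleGraph V} [DecidableRel G.Adj] (hC : Class2 G) {r : V}
    {s : ℕ → V} (hadj : G.Adj r (s 1) ∧ s 1 ≠ r)
    (ψ : EdgeColoring (G.deleteEdges {s(r, s 1)}) G.maxDegree) {γ : ℕ}
    (h1 : γ ∈ ψ.missing r) (h2 : γ ∈ ψ.missing (s 1)) : False := by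
  refine extend_contra hC (t := 1) le_rfl
    (fun i hi1 hi2 j hj1 hj2 _ => by omega)
    (fun i hi1 hi2 => by
      have : i = 1 := by omega
      subst this; exact hadj)
    ψ (fun _ => γ)
    (fun i hi1 hi2 => by
      have : i = 1 := by omega
      subst this; exact h2)
    h1
    (fun i hi1 hi2 => by omega)

lemma no_sep_chain {G : SimpleGraph V} [DecidableRel G.Adj] (hC : Class2 G) {r : V}
    {s : ℕ → V} (hadj : G.Adj r (s 1) ∧ s 1 ≠ r)
    (ψ : EdgeColoring (G.deleteEdges {s(r, s 1)}) G.maxDegree) {a b : ℕ}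
    (ha : a ∈ ψ.missing r) (hb : b ∈ ψ.missing (s 1))
    (hnr : ¬ (chainGraph ψ a b).Reachable (s 1) r) : False := by
  have haI := missing_mem_Icc ha
  have hbI := missing_mem_Icc hb
  have h1 : a ∈ (kempe ψ a b (s 1) haI hbI).missing (s 1) := by
    rw [kempe_mem_missing_of_reach ψ a b (s 1) (SimpleGraph.Reachable.refl _),
      swapColor_left]
    exact hb
  have h2 : a ∈ (kempe ψ a b (s 1) haI hbI).missing r := by
    rw [kempe_missing_of_not_reach ψ a b (s 1) hnr]
    exact ha
  exact no_common hC hadj _ h2 h1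

/-! ### The chain from `r` ends at the fan -/

lemma chain_to_fan {G : SimpleGraph V} [DecidableRel G.Adj] {r : V} {s : ℕ → V}
    {α β : ℕ} {u x : V} {ψ : EdgeColoring (G.deleteEdges {s(r, s 1)}) G.maxDegree}
    (h : Ctx G r s α β u x ψ) (t : ℕ) (ht1 : 1 ≤ t) (htα : t ≤ α) :
    (chainGraph ψ 1 (t + 1)).Reachable r (s t) := by
  by_contra hnr
  have htβ : t ≤ β := le_trans htα h.hαβ
  have h1I : (1 : ℕ) ∈ Set.Icc 1 G.maxDegree := by
    have := h.hΔ; simp only [Set.mem_Icc]; omega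
  have htI : (t + 1) ∈ Set.Icc 1 G.maxDegree := by
    have := h.hβΔ; simp only [Set.mem_Icc]; omega
  have hmem : (t + 1) ∈ ψ.missing (s t) := by
    rcases eq_or_lt_of_le ht1 with rfl | ht2
    · rw [h.ms1]
      exact Set.mem_insert _ _
    · rw [h.msi t (by omega) htβ (by omega)]
      rfl
  have hnr' : ¬ (chainGraph ψ 1 (t + 1)).Reachable (s t) r := fun hr => hnr hr.symm
  refine extend_contra h.hC ht1
    (fun i hi1 hi2 j hj1 hj2 hs => h.hinj i hi1 (by omega) j hj1 (by omega) hs)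
    (fun i hi1 hi2 => h.hadjr i hi1 (by omega))
    (kempe ψ 1 (t + 1) (s t) h1I htI)
    (fun i => if i = t then 1 else i + 1) ?_ ?_ ?_
  · intro i hi1 hit
    by_cases hit' : i = t
    · have hone : (if i = t then 1 else i + 1) = 1 := if_pos hit'
      rw [hone]
      subst hit'
      rw [kempe_mem_missing_of_reach ψ 1 (i + 1) (s i) (SimpleGraph.Reachable.refl _),
        swapColor_left]
      exact hmem
    · simp only [if_neg hit']
      have hlt : i < t := by omega
      have hfix : (kempe ψ 1 (t + 1) (s t) h1I htI).missing (s i) = ψ.missing (s i) := by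
        apply kempe_missing_of_fixed
        intro m hm
        rcases eq_or_lt_of_le hi1 with rfl | hi2
        · rw [h.ms1] at hm
          rcases hm with rfl | hm
          · constructor <;> omega
          · rw [Set.mem_singleton_iff] at hm
            subst hm
            have := h.hβΔ
            constructor <;> omega
        · rw [h.msi i (by omega) (by omega) (by omega)] at hm
          rw [Set.mem_singleton_iff] at hm
          subst hm
          constructor <;> omega
      rw [hfix]
      rcases eq_or_lt_of_le hi1 with rfl | hi2
      · rw [h.ms1]
        exact Set.mem_insert _ _
      · rw [h.msi i (by omega) (by omega) (by omega)]
        rfl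
  · rw [if_pos rfl, kempe_missing_of_not_reach ψ 1 (t + 1) (s t) hnr', h.mr]
    rfl
  · intro i hi1 hilt
    rw [if_neg (show ¬ i = t by omega)]
    have hcolor : ψ.color s(r, s (i + 1)) = i + 1 :=
      h.crs (i + 1) (by omega) (by omega) (by omega)
    have hne1 : ψ.color s(r, s (i + 1)) ≠ 1 := by rw [hcolor]; omega
    have hne2 : ψ.color s(r, s (i + 1)) ≠ t + 1 := by rw [hcolor]; omega
    rw [kempe_color_of_ne ψ 1 (t + 1) (s t) hne1 hne2, hcolor]

end Main

/-! ### Goal A: a stable coloring never gives `us₁` the color 1 -/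

section GoalA

variable [Fintype V] [DecidableEq V] {G : SimpleGraph V} [DecidableRel G.Adj] {r : V}
  {s : ℕ → V} {α β : ℕ} {u x : V}
  {ψ : EdgeColoring (G.deleteEdges {s(r, s 1)}) G.maxDegree}

lemma goalA (h : Ctx G r s α β u x ψ) : ψ.color s(u, s 1) ≠ 1 := by
  intro h1
  have hΔ := h.hΔ
  have hβΔ := h.hβΔ
  have hαβ := h.hαβ
  have hα1 := h.hα1
  have hβ1 : 1 ≤ β := h.hβ1
  have h1I : (1 : ℕ) ∈ Set.Icc 1 G.maxDegree := by simp only [Set.mem_Icc]; omega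
  have hαI : (α + 1) ∈ Set.Icc 1 G.maxDegree := by simp only [Set.mem_Icc]; omega
  have aru : (chainGraph ψ 1 (α + 1)).Adj r u := ⟨h.Hur, Or.inr h.cru⟩
  have aus : (chainGraph ψ 1 (α + 1)).Adj u (s 1) := ⟨h.Hus1, Or.inl h1⟩
  have hrs1 : (chainGraph ψ 1 (α + 1)).Reachable r (s 1) :=
    aru.reachable.trans aus.reachable
  have hrsα : (chainGraph ψ 1 (α + 1)).Reachable r (s α) := chain_to_fan h α hα1 le_rfl
  have hone_mr : (1 : ℕ) ∈ ψ.missing r := by rw [h.mr]; rfl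
  have hend_r : ∀ w₁ w₂, (chainGraph ψ 1 (α + 1)).Adj r w₁ →
      (chainGraph ψ 1 (α + 1)).Adj r w₂ → w₁ = w₂ :=
    chain_end_unique ψ 1 (α + 1) (Or.inl hone_mr)
  have hend_sα : ∀ w₁ w₂, (chainGraph ψ 1 (α + 1)).Adj (s α) w₁ →
      (chainGraph ψ 1 (α + 1)).Adj (s α) w₂ → w₁ = w₂ :=
    chain_end_unique ψ 1 (α + 1) (Or.inr (h.hαs))
  have hend_x : ∀ w₁ w₂, (chainGraph ψ 1 (α + 1)).Adj x w₁ →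
      (chainGraph ψ 1 (α + 1)).Adj x w₂ → w₁ = w₂ :=
    chain_end_unique ψ 1 (α + 1) (Or.inr (by rw [h.mx]; rfl))
  by_cases hrx : (chainGraph ψ 1 (α + 1)).Reachable r x
  · exact three_ends (chain_deg_le_two ψ 1 (α + 1))
      ((h.hadjr α hα1 hαβ).2) ((h.hxne α hα1 hαβ).symm) h.hxr.symm
      hend_sα hend_r hend_x hrsα hrx
  · have hxu : ¬ (chainGraph ψ 1 (α + 1)).Reachable x u :=
      fun hc => hrx (aru.reachable.trans hc.symm)
    have hxs1 : ¬ (chainGraph ψ 1 (α + 1)).Reachable x (s 1) :=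
      fun hc => hrx (hrs1.trans hc.symm)
    have hxr' : ¬ (chainGraph ψ 1 (α + 1)).Reachable x r := fun hc => hrx hc.symm
    have m2r : (1 : ℕ) ∈ (kempe ψ 1 (α + 1) x h1I hαI).missing r := by
      rw [kempe_missing_of_not_reach ψ 1 (α + 1) x hxr', h.mr]; rfl
    have m2s1 : G.maxDegree ∈ (kempe ψ 1 (α + 1) x h1I hαI).missing (s 1) := by
      rw [kempe_missing_of_not_reach ψ 1 (α + 1) x hxs1, h.ms1]
      exact Set.mem_insert_iff.mpr (Or.inr rfl)
    have m2x : (1 : ℕ) ∈ (kempe ψ 1 (α + 1) x h1I hαI).missing x := by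
      rw [kempe_mem_missing_of_reach ψ 1 (α + 1) x (SimpleGraph.Reachable.refl x),
        swapColor_left, h.mx]
      rfl
    have c2us1 : (kempe ψ 1 (α + 1) x h1I hαI).color s(u, s 1) = 1 := by
      rw [kempe_color_of_not_reach ψ 1 (α + 1) x hxu h.Hus1]
      exact h1
    have c2ux : (kempe ψ 1 (α + 1) x h1I hαI).color s(u, x) = G.maxDegree := by
      rw [kempe_color_of_ne ψ 1 (α + 1) x (by rw [h.cux]; omega) (by rw [h.cux]; omega)]
      exact h.cux
    have hclosed : ∀ a ∈ ({s 1, u, x} : Set V), ∀ b,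
        (chainGraph (kempe ψ 1 (α + 1) x h1I hαI) 1 G.maxDegree).Adj a b →
        b ∈ ({s 1, u, x} : Set V) := by
      intro a ha b hadj
      simp only [Set.mem_insert_iff, Set.mem_singleton_iff] at ha ⊢
      obtain ⟨hH, hcol⟩ := hadj
      rcases ha with rfl | rfl | rfl
      · rcases hcol with hcol | hcol
        · exact Or.inr (Or.inl (proper_eq _ hH h.Hus1.symm
            (by rw [hcol, color_comm _ (s 1) u, c2us1])))
        · exact absurd hcol (missing_ne m2s1 hH)
      · rcases hcol with hcol | hcol
        · exact Or.inl (proper_eq _ hH h.Hus1 (by rw [hcol, c2us1]))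
        · exact Or.inr (Or.inr (proper_eq _ hH h.Hux (by rw [hcol, c2ux])))
      · rcases hcol with hcol | hcol
        · exact absurd hcol (missing_ne m2x hH)
        · exact Or.inr (Or.inl (proper_eq _ hH h.Hux.symm
            (by rw [hcol, color_comm _ _ u, c2ux])))
    have hnreach : ¬ (chainGraph (kempe ψ 1 (α + 1) x h1I hαI) 1 G.maxDegree).Reachable
        (s 1) r := by
      intro hc
      have hin := reach_closed hclosed (Set.mem_insert _ _) hc
      simp only [Set.mem_insert_iff, Set.mem_singleton_iff] at hin
      rcases hin with hc1 | hc2 | hc3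
      · exact h.hs1r hc1.symm
      · exact h.hunr hc2.symm
      · exact h.hxr hc3.symm
    exact no_sep_chain h.hC ⟨(h.hadjr 1 le_rfl hβ1).1, h.hs1r⟩ _ m2r m2s1 hnreach

end GoalA

/-! ### The main theorem -/

section Final

variable [Fintype V] [DecidableEq V]

lemma final (G : SimpleGraph V) [DecidableRel G.Adj]
    (hHZ : IsHZ G) (hDelta : 3 ≤ G.maxDegree)
    (r : V) (s : ℕ → V)
    (φ : EdgeColoring (G.deleteEdges {s(r, s 1)}) G.maxDegree)
    (α β : ℕ) (hF : IsTypicalMultifan G r s α β φ)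
    (u x : V) (hL : IsLollipop G r s β u x)
    (hru : φ.color s(r, u) = α + 1)
    (hx : φ.missing x = {α + 1})
    (hux : φ.color s(u, x) = G.maxDegree)
    (hadj : G.Adj u (s 1))
    (τ : ℕ) (hτnd : ¬IsDeltaInducingColor G.maxDegree α β τ) :
    ∀ φ' : EdgeColoring (G.deleteEdges {s(r, s 1)}) G.maxDegree,
      LollipopStable φ φ' r s β u x →
      φ'.color s(u, s 1) ≠ 1 ∧
      (φ'.color s(u, s 1) = τ →
        (chainGraph φ' 1 τ).Adj u (s 1) ∧ (chainGraph φ' 1 τ).Reachable r u) := by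
  intro φ' hst
  obtain ⟨hα1, hαβ, hβΔ', hmf, hsdeg, hmr, hms1, hmid, htop⟩ := hF
  obtain ⟨hruG, hdegu, huxG, hdegx, hxrne, hxs⟩ := hL
  obtain ⟨⟨hmfr, hmfs, hmfc⟩, hmu', hmx', hcru', hcux'⟩ := hst
  obtain ⟨hβp, hadj', hinj', _⟩ := hmf
  have hΔ := hDelta
  have hβΔ : β + 2 ≤ G.maxDegree := by omega
  have hune : ∀ i, 1 ≤ i → i ≤ β → u ≠ s i := by
    intro i h1 h2 he
    have hd := hsdeg i (Set.mem_Icc.mpr ⟨h1, h2⟩)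
    rw [← he, hdegu] at hd
    omega
  have ctx : Ctx G r s α β u x φ' :=
    { hC := hHZ.2.1
      hΔ := hDelta
      hα1 := hα1
      hαβ := hαβ
      hβΔ := hβΔ
      hinj := fun i h1 h2 j h3 h4 he =>
        hinj' (Set.mem_Icc.mpr ⟨h1, h2⟩) (Set.mem_Icc.mpr ⟨h3, h4⟩) he
      hadjr := fun i h1 h2 => hadj' i (Set.mem_Icc.mpr ⟨h1, h2⟩)
      hur := hruG
      hux := huxG
      hus1 := hadj
      hune := hune
      hxne := fun i h1 h2 => hxs i (Set.mem_Icc.mpr ⟨h1, h2⟩)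
      hxr := hxrne
      mr := hmfr.trans hmr
      ms1 := (hmfs 1 (Set.mem_Icc.mpr ⟨le_rfl, by omega⟩)).trans hms1
      msi := fun i h2 hb hne =>
        (hmfs i (Set.mem_Icc.mpr ⟨by omega, hb⟩)).trans
          ((hmid i (Set.mem_Icc.mpr ⟨h2, hb⟩) hne).2)
      msa := fun hlt =>
        (hmfs (α + 1) (Set.mem_Icc.mpr ⟨by omega, by omega⟩)).trans ((htop hlt).2)
      mx := hmx'.trans hx
      crs := fun i h2 hb hne =>
        (hmfc i (Set.mem_Icc.mpr ⟨h2, hb⟩)).trans ((hmid i (Set.mem_Icc.mpr ⟨h2, hb⟩) hne).1)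
      crsa := fun hlt =>
        (hmfc (α + 1) (Set.mem_Icc.mpr ⟨by omega, by omega⟩)).trans ((htop hlt).1)
      cru := hcru'.trans hru
      cux := hcux'.trans hux }
  refine ⟨goalA ctx, fun hcol => ⟨⟨ctx.Hus1, Or.inr hcol⟩, ?_⟩⟩
  by_contra hnr
  have hτIcc : τ ∈ Set.Icc 1 G.maxDegree := by
    have hmem := φ'.mem_Icc s(u, s 1) ((G.deleteEdges {s(r, s 1)}).mem_edgeSet.mpr ctx.Hus1)
    rwa [hcol] at hmem
  have h1I : (1 : ℕ) ∈ Set.Icc 1 G.maxDegree := by simp only [Set.mem_Icc]; omega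
  have hτ1 : τ ≠ 1 := fun he => goalA ctx (by rw [hcol, he])
  have hτ2 : τ ≠ 2 := by
    intro he
    have h2m : (2 : ℕ) ∈ φ'.missing (s 1) := by rw [ctx.ms1]; exact Set.mem_insert _ _
    exact missing_ne h2m ctx.Hus1.symm ((color_comm φ' (s 1) u).trans (hcol.trans he))
  have hτΔ : τ ≠ G.maxDegree := fun he => hτnd (Or.inl he)
  have hτrange : ¬(α + 2 ≤ τ ∧ τ ≤ β + 1) := fun hc => hτnd (Or.inr (Set.mem_Icc.mpr hc))
  have hτα1 : τ ≠ α + 1 := by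
    intro he
    have hp : φ'.color s(u, s 1) ≠ φ'.color s(u, r) :=
      φ'.proper u (s 1) r ctx.Hus1 ctx.Hur.symm (fun hc => ctx.hs1r hc)
    apply hp
    rw [hcol, he, color_comm _ u r, ctx.cru]
  have hnru : ¬ (chainGraph φ' 1 τ).Reachable u r := fun hc => hnr hc.symm
  have ctx2 : Ctx G r s α β u x (kempe φ' 1 τ u h1I hτIcc) :=
    { hC := ctx.hC
      hΔ := ctx.hΔ
      hα1 := ctx.hα1
      hαβ := ctx.hαβ
      hβΔ := ctx.hβΔ
      hinj := ctx.hinj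
      hadjr := ctx.hadjr
      hur := ctx.hur
      hux := ctx.hux
      hus1 := ctx.hus1
      hune := ctx.hune
      hxne := ctx.hxne
      hxr := ctx.hxr
      mr := (kempe_missing_of_not_reach φ' 1 τ u hnru).trans ctx.mr
      ms1 := by
        refine (kempe_missing_of_fixed φ' 1 τ u ?_).trans ctx.ms1
        intro m hm
        rw [ctx.ms1] at hm
        rcases hm with rfl | hm
        · exact ⟨by omega, Ne.symm hτ2⟩
        · rw [Set.mem_singleton_iff] at hm
          subst hm
          exact ⟨by omega, Ne.symm hτΔ⟩
      msi := by
        intro i h2 hb hne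
        by_cases hiτ : i + 1 = τ
        · have hτα : τ ≤ α := by
            have hca : τ ≤ α + 1 := by
              by_contra hgt
              exact hτrange ⟨by omega, by omega⟩
            omega
          have hreach := chain_to_fan ctx i (by omega) (by omega)
          rw [hiτ] at hreach
          have hnri : ¬ (chainGraph φ' 1 τ).Reachable u (s i) :=
            fun hc => hnr (hreach.trans hc.symm)
          exact (kempe_missing_of_not_reach φ' 1 τ u hnri).trans (ctx.msi i h2 hb hne)
        · refine (kempe_missing_of_fixed φ' 1 τ u ?_).trans (ctx.msi i h2 hb hne)
          intro m hm
          rw [ctx.msi i h2 hb hne, Set.mem_singleton_iff] at hm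
          subst hm
          exact ⟨by omega, hiτ⟩
      msa := by
        intro hlt
        refine (kempe_missing_of_fixed φ' 1 τ u ?_).trans (ctx.msa hlt)
        intro m hm
        rw [ctx.msa hlt, Set.mem_singleton_iff] at hm
        subst hm
        refine ⟨by omega, ?_⟩
        intro he
        exact hτrange ⟨by omega, by omega⟩
      mx := by
        refine (kempe_missing_of_fixed φ' 1 τ u ?_).trans ctx.mx
        intro m hm
        rw [ctx.mx, Set.mem_singleton_iff] at hm
        subst hm
        exact ⟨by omega, Ne.symm hτα1⟩
      crs := fun i h2 hb hne =>
        (kempe_color_of_not_reach φ' 1 τ u hnru (ctx.Hrs i h2 hb)).trans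
          (ctx.crs i h2 hb hne)
      crsa := fun hlt =>
        (kempe_color_of_not_reach φ' 1 τ u hnru
          (ctx.Hrs (α + 1) (by omega) (by omega))).trans (ctx.crsa hlt)
      cru := (kempe_color_of_not_reach φ' 1 τ u hnru ctx.Hur).trans ctx.cru
      cux := by
        rw [kempe_color_of_ne φ' 1 τ u (by rw [ctx.cux]; omega)
          (by rw [ctx.cux]; exact Ne.symm hτΔ)]
        exact ctx.cux }
  apply goalA ctx2
  rw [kempe_color_of_reach φ' 1 τ u (SimpleGraph.Reachable.refl u), hcol, swapColor_right]

end Final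
end HZAux

theorem statement_17 [Fintype V] [DecidableEq V]
    (G : SimpleGraph V) [DecidableRel G.Adj]
    (hHZ : IsHZ G) (hDelta : 3 ≤ G.maxDegree)
    (r : V) (s : ℕ → V)
    (hr : G.degree r = G.maxDegree) (hlab : NbrLabeling G r s)
    (φ : EdgeColoring (G.deleteEdges {s(r, s 1)}) G.maxDegree)
    (α β : ℕ) (hF : IsTypicalMultifan G r s α β φ)
    (u x : V) (hL : IsLollipop G r s β u x)
    (hru : φ.color s(r, u) = α + 1)
    (hx : φ.missing x = {α + 1})
    (hux : φ.color s(u, x) = G.maxDegree)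
    (hadj : G.Adj u (s 1))
    (τ : ℕ) (hτ : φ.color s(u, s 1) = τ)
    (hτnd : ¬IsDeltaInducingColor G.maxDegree α β τ) :
    ∀ φ' : EdgeColoring (G.deleteEdges {s(r, s 1)}) G.maxDegree,
      LollipopStable φ φ' r s β u x →
      φ'.color s(u, s 1) ≠ 1 ∧
      (φ'.color s(u, s 1) = τ →
        (chainGraph φ' 1 τ).Adj u (s 1) ∧ (chainGraph φ' 1 τ).Reachable r u) := by
  exact HZAux.final G hHZ hDelta r s φ α β hF u x hL hru hx hux hadj τ hτnd
end

section
/- Let (G,rs₁,φ) be a coloring-triple, F=F_φ(r,s₁:s_α) a typical 2-inducing multifan, and L=(F,ru,u,ux,x) a lollipop centered at r with φ(ru)=α+1, φ̄(x)={α+1}, and φ(ux)=μ where μ∈φ̄(F) is a 2-inducing color of F. Suppose u is adjacent to s_{μ−1} in G and let τ:=φ(us_{μ−1}). Then for every (L,φ)-stable coloring φ*∈C^Δ(G−rs₁): φ*(us_{μ−1})≠1, and moreover if φ*(us_{μ−1})=τ then the edge us_{μ−1} lies on the (1,τ)-chain of G−rs₁ containing r under φ* (i.e. us_{μ−1}∈P_r(1,τ,φ*)).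 -/
open SimpleGraph

variable {V : Type*}

/- ===================== Infrastructure ===================== -/

section Infra

variable {k : ℕ} {H : SimpleGraph V}

namespace EdgeColoring

lemma color_comm (φ : EdgeColoring H k) (p q : V) :
    φ.color s(p, q) = φ.color s(q, p) := by rw [Sym2.eq_swap]

lemma missing_ne (φ : EdgeColoring H k) {v : V} {c : ℕ} (hc : c ∈ φ.missing v)
    {w : V} (h : H.Adj v w) : φ.color s(v, w) ≠ c := hc.2 w h

lemma exists_edge (φ : EdgeColoring H k) {v : V} {c : ℕ} (hIcc : c ∈ Set.Icc 1 k)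
    (hc : c ∉ φ.missing v) : ∃ w, H.Adj v w ∧ φ.color s(v, w) = c := by
  by_contra h
  push_neg at h
  exact hc ⟨hIcc, fun w hw => h w hw⟩

lemma missing_congr (φ ψ : EdgeColoring H k) (v : V)
    (h : ∀ w, H.Adj v w → ψ.color s(v, w) = φ.color s(v, w)) :
    ψ.missing v = φ.missing v :=
  Set.ext fun c => and_congr_right fun _ =>
    forall_congr' fun w => imp_congr_right fun hw => by rw [h w hw]

end EdgeColoring

lemma chainGraph_adj {φ : EdgeColoring H k} {a b : ℕ} {p q : V} :
    (chainGraph φ a b).Adj p q ↔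
      H.Adj p q ∧ (φ.color s(p, q) = a ∨ φ.color s(p, q) = b) := Iff.rfl

lemma chainGraph_comm (φ : EdgeColoring H k) (a b : ℕ) :
    chainGraph φ a b = chainGraph φ b a := by
  ext p q
  exact and_congr_right fun _ => or_comm

/-- vertices at which a chain-color is missing are "pendant" in the chain graph -/
lemma chain_pendant_left (φ : EdgeColoring H k) {a : ℕ} (b : ℕ) {v : V}
    (ha : a ∈ φ.missing v) :
    ∀ w₁ w₂, (chainGraph φ a b).Adj v w₁ → (chainGraph φ a b).Adj v w₂ → w₁ = w₂ := by
  intro w₁ w₂ h1 h2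
  by_contra hne
  have c1 : φ.color s(v, w₁) = b := (h1.2).resolve_left (φ.missing_ne ha h1.1)
  have c2 : φ.color s(v, w₂) = b := (h2.2).resolve_left (φ.missing_ne ha h2.1)
  exact φ.proper v w₁ w₂ h1.1 h2.1 hne (c1.trans c2.symm)

lemma chain_pendant_right (φ : EdgeColoring H k) (a : ℕ) {b : ℕ} {v : V}
    (hb : b ∈ φ.missing v) :
    ∀ w₁ w₂, (chainGraph φ a b).Adj v w₁ → (chainGraph φ a b).Adj v w₂ → w₁ = w₂ := by
  rw [chainGraph_comm]
  exact chain_pendant_left φ a hb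

lemma chain_maxdeg (φ : EdgeColoring H k) (a b : ℕ) :
    ∀ v w₁ w₂ w₃, (chainGraph φ a b).Adj v w₁ → (chainGraph φ a b).Adj v w₂ →
      (chainGraph φ a b).Adj v w₃ → w₁ = w₂ ∨ w₁ = w₃ ∨ w₂ = w₃ := by
  intro v w₁ w₂ w₃ h1 h2 h3
  by_contra hc
  push_neg at hc
  obtain ⟨n12, n13, n23⟩ := hc
  have d12 := φ.proper v w₁ w₂ h1.1 h2.1 n12
  have d13 := φ.proper v w₁ w₃ h1.1 h3.1 n13
  have d23 := φ.proper v w₂ w₃ h2.1 h3.1 n23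
  rcases h1.2 with e1 | e1 <;> rcases h2.2 with e2 | e2 <;> rcases h3.2 with e3 | e3 <;>
    first
      | exact d12 (e1.trans e2.symm)
      | exact d13 (e1.trans e3.symm)
      | exact d23 (e2.trans e3.symm)

lemma walk_end_mem {C : SimpleGraph V} {S : Set V}
    (hS : ∀ v ∈ S, ∀ w, C.Adj v w → w ∈ S) :
    ∀ {p q : V}, C.Walk p q → p ∈ S → q ∈ S := by
  intro p q W
  induction W with
  | nil => exact id
  | cons h w ih => exact fun hp => ih (hS _ hp _ h)

lemma reachable_mem_of_closed {C : SimpleGraph V} {S : Set V}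
    (hS : ∀ v ∈ S, ∀ w, C.Adj v w → w ∈ S) {p q : V} (hp : p ∈ S)
    (h : C.Reachable p q) : q ∈ S := by
  obtain ⟨W⟩ := h
  exact walk_end_mem hS W hp

end Infra
section Swap

variable {k : ℕ} {H : SimpleGraph V}

open Classical in
/-- the result of interchanging colors `a` and `b` on the `(a,b)`-chain containing `z` -/
noncomputable def swapFun (φ : EdgeColoring H k) (a b : ℕ) (z : V) (e : Sym2 V) : ℕ :=
  if (∃ p ∈ e, (chainGraph φ a b).Reachable z p) ∧ (φ.color e = a ∨ φ.color e = b) then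
    (if φ.color e = a then b else a)
  else φ.color e

lemma swapFun_eq_of_color {φ : EdgeColoring H k} {a b : ℕ} {z : V} {e : Sym2 V}
    (h1 : φ.color e ≠ a) (h2 : φ.color e ≠ b) : swapFun φ a b z e = φ.color e := by
  rw [swapFun, if_neg]
  rintro ⟨-, h | h⟩
  exacts [h1 h, h2 h]

lemma swapFun_eq_of_not_reach {φ : EdgeColoring H k} {a b : ℕ} {z : V} {p q : V}
    (hp : ¬ (chainGraph φ a b).Reachable z p) (hq : ¬ (chainGraph φ a b).Reachable z q) :
    swapFun φ a b z s(p, q) = φ.color s(p, q) := by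
  rw [swapFun, if_neg]
  rintro ⟨⟨v, hv, hrv⟩, -⟩
  rcases Sym2.mem_iff.mp hv with rfl | rfl
  exacts [hp hrv, hq hrv]

lemma swapFun_a {φ : EdgeColoring H k} {a b : ℕ} {z : V} {p q : V}
    (h : (chainGraph φ a b).Reachable z p ∨ (chainGraph φ a b).Reachable z q)
    (hc : φ.color s(p, q) = a) : swapFun φ a b z s(p, q) = b := by
  rw [swapFun, if_pos, if_pos hc]
  refine ⟨?_, Or.inl hc⟩
  rcases h with h | h
  exacts [⟨p, by simp, h⟩, ⟨q, by simp, h⟩]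

lemma swapFun_b {φ : EdgeColoring H k} {a b : ℕ} {z : V} {p q : V} (hab : a ≠ b)
    (h : (chainGraph φ a b).Reachable z p ∨ (chainGraph φ a b).Reachable z q)
    (hc : φ.color s(p, q) = b) : swapFun φ a b z s(p, q) = a := by
  rw [swapFun, if_pos, if_neg (by rw [hc]; exact hab.symm)]
  refine ⟨?_, Or.inr hc⟩
  rcases h with h | h
  exacts [⟨p, by simp, h⟩, ⟨q, by simp, h⟩]

lemma swapFun_eq_iff_of_ne {φ : EdgeColoring H k} {a b : ℕ} {z : V} {e : Sym2 V} {c : ℕ}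
    (hca : c ≠ a) (hcb : c ≠ b) : swapFun φ a b z e = c ↔ φ.color e = c := by
  rw [swapFun]
  split_ifs with h1 h2
  · simp only [hcb.symm, false_iff]
    rw [h2]; exact hca.symm
  · have hb : φ.color e = b := h1.2.resolve_left h2
    simp only [hca.symm, false_iff]
    rw [hb]; exact hcb.symm
  · exact Iff.rfl

lemma swapFun_eq_self_of_eq {φ : EdgeColoring H k} {a b : ℕ} {z : V} (hab : a = b)
    (e : Sym2 V) : swapFun φ a b z e = φ.color e := by
  subst hab
  rw [swapFun]
  split_ifs with h1 h2
  · exact h2.symm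
  · exact (h1.2.resolve_left h2).symm
  · rfl

noncomputable def EdgeColoring.swap (φ : EdgeColoring H k) (a b : ℕ)
    (ha : a ∈ Set.Icc 1 k) (hb : b ∈ Set.Icc 1 k) (z : V) : EdgeColoring H k where
  color := swapFun φ a b z
  mem_Icc e he := by
    rw [swapFun]
    split_ifs with h1 h2
    · exact hb
    · exact ha
    · exact φ.mem_Icc e he
  proper p q w hq hw hne := by
    by_cases hab : a = b
    · rw [swapFun_eq_self_of_eq hab, swapFun_eq_self_of_eq hab]
      exact φ.proper p q w hq hw hne
    have hcc := φ.proper p q w hq hw hne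
    have key : ∀ q' w' : V, H.Adj p q' → H.Adj p w' → φ.color s(p, q') ≠ φ.color s(p, w') →
        ((∃ v ∈ s(p, q'), (chainGraph φ a b).Reachable z v) ∧
          (φ.color s(p, q') = a ∨ φ.color s(p, q') = b)) →
        ¬ ((∃ v ∈ s(p, w'), (chainGraph φ a b).Reachable z v) ∧
          (φ.color s(p, w') = a ∨ φ.color s(p, w') = b)) →
        swapFun φ a b z s(p, q') ≠ swapFun φ a b z s(p, w') := by
      intro q' w' hq' hw' hcc' h1 h2
      have hval2 : swapFun φ a b z s(p, w') = φ.color s(p, w') := by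
        rw [swapFun, if_neg h2]
      by_cases hc2 : φ.color s(p, w') = a ∨ φ.color s(p, w') = b
      · -- then no endpoint of (p,w') is reachable; but (p,q') has a reachable endpoint
        exfalso
        have hpr : (chainGraph φ a b).Reachable z p := by
          obtain ⟨v, hv, hrv⟩ := h1.1
          rcases Sym2.mem_iff.mp hv with rfl | rfl
          · exact hrv
          · exact hrv.trans (SimpleGraph.Adj.reachable ⟨hq'.symm, by
              rw [Sym2.eq_swap]; exact h1.2⟩)
        exact h2 ⟨⟨p, by simp, hpr⟩, hc2⟩
      · push_neg at hc2
        rw [hval2, swapFun, if_pos h1]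
        split_ifs with h3
        · exact fun hh => hc2.2 hh.symm
        · exact fun hh => hc2.1 hh.symm
    by_cases h1 : (∃ v ∈ s(p, q), (chainGraph φ a b).Reachable z v) ∧
        (φ.color s(p, q) = a ∨ φ.color s(p, q) = b) <;>
      by_cases h2 : (∃ v ∈ s(p, w), (chainGraph φ a b).Reachable z v) ∧
        (φ.color s(p, w) = a ∨ φ.color s(p, w) = b)
    · -- both swapped
      rw [swapFun, if_pos h1, swapFun, if_pos h2]
      rcases h1.2 with e1 | e1 <;> rcases h2.2 with e2 | e2
      · exact absurd (e1.trans e2.symm) hcc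
      · rw [if_pos e1, if_neg (by rw [e2]; exact (Ne.symm hab))]
        exact Ne.symm hab
      · rw [if_neg (by rw [e1]; exact (Ne.symm hab)), if_pos e2]
        exact hab
      · exact absurd (e1.trans e2.symm) hcc
    · exact key q w hq hw hcc h1 h2
    · exact (key w q hw hq hcc.symm h2 h1).symm
    · rw [swapFun, if_neg h1, swapFun, if_neg h2]
      exact hcc

@[simp] lemma swap_color {φ : EdgeColoring H k} {a b : ℕ} {ha : a ∈ Set.Icc 1 k}
    {hb : b ∈ Set.Icc 1 k} {z : V} :
    (φ.swap a b ha hb z).color = swapFun φ a b z := rfl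

/-- (S4) missing sets away from the swapped chain are unchanged -/
lemma missing_swap_of_not_reach {φ : EdgeColoring H k} {a b : ℕ} {ha : a ∈ Set.Icc 1 k}
    {hb : b ∈ Set.Icc 1 k} {z : V} {v : V} (hv : ¬ (chainGraph φ a b).Reachable z v) :
    (φ.swap a b ha hb z).missing v = φ.missing v := by
  apply EdgeColoring.missing_congr
  intro w hw
  rw [swap_color]
  by_cases hc : φ.color s(v, w) = a ∨ φ.color s(v, w) = b
  · refine swapFun_eq_of_not_reach hv fun hrw => hv ?_
    exact hrw.trans (SimpleGraph.Adj.reachable ⟨hw.symm, by rw [Sym2.eq_swap]; exact hc⟩)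
  · push_neg at hc
    exact swapFun_eq_of_color hc.1 hc.2

/-- (S5) missing sets of interior vertices of the swapped chain are unchanged -/
lemma missing_swap_internal {φ : EdgeColoring H k} {a b : ℕ} {ha : a ∈ Set.Icc 1 k}
    {hb : b ∈ Set.Icc 1 k} {z : V} {v : V} (hab : a ≠ b)
    (hv : (chainGraph φ a b).Reachable z v)
    {wa : V} (hwa : H.Adj v wa) (hca : φ.color s(v, wa) = a)
    {wb : V} (hwb : H.Adj v wb) (hcb : φ.color s(v, wb) = b) :
    (φ.swap a b ha hb z).missing v = φ.missing v := by
  ext c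
  by_cases hcA : c = a
  · subst hcA
    apply iff_of_false
    · intro hmem
      exact hmem.2 wb hwb (swapFun_b hab (Or.inl hv) hcb)
    · intro hmem
      exact hmem.2 wa hwa hca
  by_cases hcB : c = b
  · subst hcB
    apply iff_of_false
    · intro hmem
      exact hmem.2 wa hwa (swapFun_a (Or.inl hv) hca)
    · intro hmem
      exact hmem.2 wb hwb hcb
  · exact and_congr_right fun _ => forall_congr' fun w => imp_congr_right fun hw => by
      rw [swap_color, not_iff_not]
      exact swapFun_eq_iff_of_ne hcA hcB

/-- (S6) missing set of a pendant vertex of the swapped chain -/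
lemma missing_swap_pendant {φ : EdgeColoring H k} {a b : ℕ} {ha : a ∈ Set.Icc 1 k}
    {hb : b ∈ Set.Icc 1 k} {z : V} {v : V} (hab : a ≠ b)
    (hv : (chainGraph φ a b).Reachable z v)
    {wa : V} (hwa : H.Adj v wa) (hca : φ.color s(v, wa) = a)
    (hbv : b ∈ φ.missing v) :
    (φ.swap a b ha hb z).missing v = insert a (φ.missing v \ {b}) := by
  ext c
  by_cases hcA : c = a
  · subst hcA
    apply iff_of_true
    · refine ⟨ha, fun w hw => ?_⟩
      rw [swap_color]
      by_cases h1 : φ.color s(v, w) = c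
      · rw [swapFun_a (Or.inl hv) h1]; exact Ne.symm hab
      by_cases h2 : φ.color s(v, w) = b
      · exact absurd h2 (φ.missing_ne hbv hw)
      · rw [swapFun_eq_of_color h1 h2]; exact h1
    · exact Set.mem_insert _ _
  by_cases hcB : c = b
  · subst hcB
    apply iff_of_false
    · intro hmem
      exact hmem.2 wa hwa (swapFun_a (Or.inl hv) hca)
    · intro hmem
      rcases Set.mem_insert_iff.mp hmem with h | h
      · exact hab h.symm
      · exact h.2 rfl
  · have : c ∈ insert a (φ.missing v \ {b}) ↔ c ∈ φ.missing v := by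
      rw [Set.mem_insert_iff, Set.mem_diff, Set.mem_singleton_iff]
      simp [hcA, hcB]
    rw [this]
    exact and_congr_right fun _ => forall_congr' fun w => imp_congr_right fun hw => by
      rw [swap_color, not_iff_not]
      exact swapFun_eq_iff_of_ne hcA hcB

end Swap
section Paths

open SimpleGraph.Walk

lemma path_escape {C : SimpleGraph V} {b : V}
    (pb : ∀ w₁ w₂, C.Adj b w₁ → C.Adj b w₂ → w₁ = w₂)
    (hdeg : ∀ v w₁ w₂ w₃, C.Adj v w₁ → C.Adj v w₂ → C.Adj v w₃ →
      w₁ = w₂ ∨ w₁ = w₃ ∨ w₂ = w₃) :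
    ∀ {a : V} (P : C.Walk a b), P.IsPath →
      ∀ v w, v ∈ P.support → C.Adj v w → w ∉ P.support → v = a := by
  intro a P
  induction P with
  | nil =>
    intro _ v w hv _ _
    simpa using hv
  | @cons a c b h p ih =>
    intro hP v w hv hvw hw
    by_cases hva : v = a
    · exact hva
    exfalso
    have hP' := (SimpleGraph.Walk.cons_isPath_iff h p).mp hP
    have hv' : v ∈ p.support := by
      rcases (by simpa using hv : v = a ∨ v ∈ p.support) with h' | h'
      · exact absurd h' hva
      · exact h'
    have hwp : w ∉ p.support := fun hh => hw (by simp [hh])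
    have hwa : w ≠ a := fun hh => hw (by simp [hh])
    have hvc : v = c := ih pb hP'.1 v w hv' hvw hwp
    subst hvc
    cases p with
    | nil =>
      -- v = b
      exact hwa (pb w a hvw h.symm)
    | @cons _ d _ h2 p2 =>
      rcases hdeg v w a d hvw h.symm h2 with h' | h' | h'
      · exact hwa h'
      · exact hwp (by rw [h']; simp)
      · exact hP'.2 (by rw [h']; simp)

lemma internal_two {C : SimpleGraph V} :
    ∀ {a b : V} (P : C.Walk a b), P.IsPath → ∀ v, v ∈ P.support → v ≠ a → v ≠ b →
      ∃ w₁ w₂, w₁ ≠ w₂ ∧ C.Adj v w₁ ∧ C.Adj v w₂ := by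
  intro a b P
  induction P with
  | nil =>
    intro _ v hv hva _
    exact absurd (by simpa using hv) hva
  | @cons a c b h p ih =>
    intro hP v hv hva hvb
    have hP' := (SimpleGraph.Walk.cons_isPath_iff h p).mp hP
    have hv' : v ∈ p.support := by
      rcases (by simpa using hv : v = a ∨ v ∈ p.support) with h' | h'
      · exact absurd h' hva
      · exact h'
    by_cases hvc : v = c
    · subst hvc
      cases p with
      | nil => exact absurd rfl hvb
      | @cons _ d _ h2 p2 =>
        refine ⟨a, d, fun hh => hP'.2 (by rw [hh]; simp), h.symm, h2⟩
    · exact ih hP'.1 v hv' hvc hvb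

lemma three_pendant [DecidableEq V] {C : SimpleGraph V}
    (hdeg : ∀ v w₁ w₂ w₃, C.Adj v w₁ → C.Adj v w₂ → C.Adj v w₃ →
      w₁ = w₂ ∨ w₁ = w₃ ∨ w₂ = w₃)
    {a b c : V}
    (pa : ∀ w₁ w₂, C.Adj a w₁ → C.Adj a w₂ → w₁ = w₂)
    (pb : ∀ w₁ w₂, C.Adj b w₁ → C.Adj b w₂ → w₁ = w₂)
    (pc : ∀ w₁ w₂, C.Adj c w₁ → C.Adj c w₂ → w₁ = w₂)
    (hab : a ≠ b) (hac : a ≠ c) (hbc : b ≠ c)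
    (h1 : C.Reachable a b) (h2 : C.Reachable a c) : False := by
  obtain ⟨P0⟩ := h1
  obtain ⟨P1, hP1⟩ := P0.toPath
  have hclosed : ∀ v ∈ {y | y ∈ P1.support}, ∀ w, C.Adj v w → w ∈ {y | y ∈ P1.support} := by
    intro v hv w hvw
    by_contra hw
    have hva : v = a := path_escape pb hdeg P1 hP1 v w hv hvw hw
    subst hva
    cases hPP : P1 with
    | nil => exact hab rfl
    | @cons _ d _ h' p' =>
      have : w = d := pa w d hvw h'
      exact hw (by rw [hPP, this]; simp)
  have hcmem : c ∈ P1.support :=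
    reachable_mem_of_closed hclosed (SimpleGraph.Walk.start_mem_support P1) h2
  obtain ⟨w₁, w₂, hne, hw1, hw2⟩ := internal_two P1 hP1 c hcmem (Ne.symm hac) (Ne.symm hbc)
  exact hne (pc w₁ w₂ hw1 hw2)

end Paths
section ShiftExtend

variable [Fintype V] [DecidableEq V]

/-- at a vertex of full degree, every color occurs -/
lemma all_colors_at_full (G : SimpleGraph V) [DecidableRel G.Adj] (r s1v : V)
    (φ : EdgeColoring (G.deleteEdges {s(r, s1v)}) G.maxDegree) {u : V}
    (hur : u ≠ r) (hus : u ≠ s1v) (hdeg : G.degree u = G.maxDegree) {c : ℕ}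
    (hc : c ∈ Set.Icc 1 G.maxDegree) :
    ∃ w, (G.deleteEdges {s(r, s1v)}).Adj u w ∧ φ.color s(u, w) = c := by
  classical
  have hH : ∀ w, G.Adj u w → (G.deleteEdges {s(r, s1v)}).Adj u w := by
    intro w hw
    rw [SimpleGraph.deleteEdges_adj]
    refine ⟨hw, fun hm => ?_⟩
    rcases Sym2.eq_iff.mp (Set.mem_singleton_iff.mp hm) with ⟨h1, -⟩ | ⟨h1, -⟩
    exacts [hur h1, hus h1]
  set f : V → ℕ := fun w => φ.color s(u, w) with hf
  have himg : (G.neighborFinset u).image f ⊆ Finset.Icc 1 G.maxDegree := by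
    intro y hy
    rw [Finset.mem_image] at hy
    obtain ⟨w, hw, rfl⟩ := hy
    have := φ.mem_Icc s(u, w)
      ((SimpleGraph.mem_edgeSet _).mpr (hH w (by rwa [SimpleGraph.mem_neighborFinset] at hw)))
    rw [Finset.mem_Icc]
    exact Set.mem_Icc.mp this
  have hcard : ((G.neighborFinset u).image f).card = G.maxDegree := by
    rw [Finset.card_image_of_injOn, ← SimpleGraph.degree, hdeg]
    intro w₁ hw₁ w₂ hw₂ hfe
    by_contra hne
    have hw₁' : G.Adj u w₁ := by
      rw [← SimpleGraph.mem_neighborFinset]; exact Finset.mem_coe.mp hw₁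
    have hw₂' : G.Adj u w₂ := by
      rw [← SimpleGraph.mem_neighborFinset]; exact Finset.mem_coe.mp hw₂
    exact φ.proper u w₁ w₂ (hH _ hw₁') (hH _ hw₂') hne hfe
  have himeq : (G.neighborFinset u).image f = Finset.Icc 1 G.maxDegree := by
    apply Finset.eq_of_subset_of_card_le himg
    rw [hcard, Nat.card_Icc]
    omega
  have hcmem : c ∈ (G.neighborFinset u).image f := by
    rw [himeq, Finset.mem_Icc]
    exact Set.mem_Icc.mp hc
  rw [Finset.mem_image] at hcmem
  obtain ⟨w, hw, hfw⟩ := hcmem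
  rw [SimpleGraph.mem_neighborFinset] at hw
  exact ⟨w, hH w hw, hfw⟩

/-- shifting the fan `r s₁, …, r sₘ` and coloring `r s₁` yields a coloring of all of `G`,
contradicting `Class2`. -/
lemma shift_extend (G : SimpleGraph V) [DecidableRel G.Adj] (hC2 : Class2 G)
    (r : V) (sv : ℕ → V) (m : ℕ) (hm : 1 ≤ m) (hmD : m + 2 ≤ G.maxDegree)
    (ψ : EdgeColoring (G.deleteEdges {s(r, sv 1)}) G.maxDegree)
    (hadj : ∀ i, 1 ≤ i → i ≤ m → G.Adj r (sv i))
    (hinj : ∀ i j, 1 ≤ i → i ≤ m → 1 ≤ j → j ≤ m → sv i = sv j → i = j)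
    (hr1 : 1 ∈ ψ.missing r)
    (hcol : ∀ i, 2 ≤ i → i ≤ m → ψ.color s(r, sv i) = i)
    (hmiss : ∀ i, 1 ≤ i → i < m → (i + 1) ∈ ψ.missing (sv i))
    (hlast : 1 ∈ ψ.missing (sv m)) : False := by
  classical
  have hsr : ∀ i, 1 ≤ i → i ≤ m → sv i ≠ r := fun i h1 h2 => (hadj i h1 h2).ne'
  -- the recoloring function
  obtain ⟨f, hfFan, hfOther⟩ : ∃ f : Sym2 V → ℕ,
      (∀ i, 1 ≤ i → i ≤ m → f s(r, sv i) = if i = m then 1 else i + 1) ∧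
      (∀ e, (∀ i, 1 ≤ i → i ≤ m → e ≠ s(r, sv i)) → f e = ψ.color e) := by
    refine ⟨fun e => if h : ∃ i, (1 ≤ i ∧ i ≤ m) ∧ e = s(r, sv i) then
      (if h.choose = m then 1 else h.choose + 1) else ψ.color e, ?_, ?_⟩
    · intro i h1 h2
      have hex : ∃ j, (1 ≤ j ∧ j ≤ m) ∧ s(r, sv i) = s(r, sv j) := ⟨i, ⟨h1, h2⟩, rfl⟩
      beta_reduce
      rw [dif_pos hex]
      have hsp := hex.choose_spec
      have heq : sv i = sv hex.choose := by
        rcases Sym2.eq_iff.mp hsp.2 with ⟨-, h⟩ | ⟨h', -⟩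
        · exact h
        · exact absurd h'.symm (hsr _ hsp.1.1 hsp.1.2)
      have hci : hex.choose = i := hinj _ _ hsp.1.1 hsp.1.2 h1 h2 heq.symm
      rw [hci]
    · intro e he
      beta_reduce
      rw [dif_neg]
      rintro ⟨i, hi, rfl⟩
      exact he i hi.1 hi.2 rfl
  have hnotdel : ∀ (p q : V), (∀ i, 1 ≤ i → i ≤ m → s(p, q) ≠ s(r, sv i)) →
      G.Adj p q → (G.deleteEdges {s(r, sv 1)}).Adj p q := by
    intro p q hpq h
    rw [SimpleGraph.deleteEdges_adj]
    exact ⟨h, fun hmem => hpq 1 le_rfl hm (Set.mem_singleton_iff.mp hmem)⟩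
  -- two key properness facts against non-fan edges
  have keyR : ∀ i w', 1 ≤ i → i ≤ m → G.Adj r w' →
      (∀ j, 1 ≤ j → j ≤ m → s(r, w') ≠ s(r, sv j)) →
      f s(r, sv i) ≠ f s(r, w') := by
    intro i w' h1 h2 hw' hOther
    rw [hfOther _ hOther, hfFan i h1 h2]
    have hHrw : (G.deleteEdges {s(r, sv 1)}).Adj r w' := hnotdel _ _ hOther hw'
    split_ifs with him
    · exact fun hh => (hr1.2 w' hHrw) hh.symm
    · have hcol2 : ψ.color s(r, sv (i + 1)) = i + 1 := hcol (i + 1) (by omega) (by omega)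
      have hwne : w' ≠ sv (i + 1) := by
        intro hh
        exact hOther (i + 1) (by omega) (by omega) (by rw [hh])
      have hHr2 : (G.deleteEdges {s(r, sv 1)}).Adj r (sv (i + 1)) := by
        rw [SimpleGraph.deleteEdges_adj]
        refine ⟨hadj (i + 1) (by omega) (by omega), fun hmem => ?_⟩
        rcases Sym2.eq_iff.mp (Set.mem_singleton_iff.mp hmem) with ⟨-, hh⟩ | ⟨hh, -⟩
        · have := hinj (i + 1) 1 (by omega) (by omega) le_rfl hm hh
          omega
        · exact (hsr 1 le_rfl hm) hh.symm
      have hne2 := ψ.proper r w' (sv (i + 1)) hHrw hHr2 hwne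
      rw [hcol2] at hne2
      exact fun hh => hne2 hh.symm
  have keyS : ∀ i w', 1 ≤ i → i ≤ m → G.Adj (sv i) w' → w' ≠ r →
      (∀ j, 1 ≤ j → j ≤ m → s(sv i, w') ≠ s(r, sv j)) →
      f s(sv i, r) ≠ f s(sv i, w') := by
    intro i w' h1 h2 hw' hwr hOther
    rw [hfOther _ hOther]
    have hswap : f s(sv i, r) = if i = m then 1 else i + 1 := by
      rw [Sym2.eq_swap]; exact hfFan i h1 h2
    rw [hswap]
    have hHsw : (G.deleteEdges {s(r, sv 1)}).Adj (sv i) w' := hnotdel _ _ hOther hw'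
    split_ifs with him
    · subst him
      exact fun hh => (hlast.2 w' hHsw) hh.symm
    · have hmem := hmiss i h1 (by omega)
      exact fun hh => (hmem.2 w' hHsw) hh.symm
  -- it is a proper coloring of G
  refine (hC2.false : EdgeColoring G G.maxDegree → False) ⟨f, ?_, ?_⟩
  · -- mem_Icc
    intro e he
    by_cases hFan : ∃ i, (1 ≤ i ∧ i ≤ m) ∧ e = s(r, sv i)
    · obtain ⟨i, hi, rfl⟩ := hFan
      rw [hfFan i hi.1 hi.2]
      split_ifs with h
      · exact ⟨le_rfl, by omega⟩
      · exact ⟨by omega, by omega⟩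
    · rw [hfOther e (fun i h1 h2 hee => hFan ⟨i, ⟨h1, h2⟩, hee⟩)]
      apply ψ.mem_Icc
      rw [SimpleGraph.edgeSet_deleteEdges]
      exact ⟨he, fun hmem => hFan ⟨1, ⟨le_rfl, hm⟩, Set.mem_singleton_iff.mp hmem⟩⟩
  · -- proper
    intro p q w hq hw hne
    have hchar : ∀ y : V, (∃ i, 1 ≤ i ∧ i ≤ m ∧ ((p = r ∧ y = sv i) ∨ (p = sv i ∧ y = r)))
        ∨ (∀ i, 1 ≤ i → i ≤ m → s(p, y) ≠ s(r, sv i)) := by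
      intro y
      by_cases h : ∃ i, (1 ≤ i ∧ i ≤ m) ∧ s(p, y) = s(r, sv i)
      · obtain ⟨i, hi, heq⟩ := h
        rcases Sym2.eq_iff.mp heq with ⟨h1, h2⟩ | ⟨h1, h2⟩
        · exact Or.inl ⟨i, hi.1, hi.2, Or.inl ⟨h1, h2⟩⟩
        · exact Or.inl ⟨i, hi.1, hi.2, Or.inr ⟨h1, h2⟩⟩
      · exact Or.inr fun i h1 h2 hee => h ⟨i, ⟨h1, h2⟩, hee⟩
    -- asymmetric case handler
    have key : ∀ q' w' : V, G.Adj p q' → G.Adj p w' → q' ≠ w' →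
        (∃ i, 1 ≤ i ∧ i ≤ m ∧ ((p = r ∧ q' = sv i) ∨ (p = sv i ∧ q' = r))) →
        (∀ i, 1 ≤ i → i ≤ m → s(p, w') ≠ s(r, sv i)) →
        f s(p, q') ≠ f s(p, w') := by
      intro q' w' hq' hw' hne' hFan hOther
      obtain ⟨i, h1, h2, hcase⟩ := hFan
      rcases hcase with ⟨hpr, hqe⟩ | ⟨hpe, hqr⟩
      · rw [hpr] at hOther hw'
        rw [hpr, hqe]
        exact keyR i w' h1 h2 hw' hOther
      · rw [hpe] at hOther hw'
        rw [hpe, hqr]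
        have hwr : w' ≠ r := fun hh => hne' (hqr.trans hh.symm)
        exact keyS i w' h1 h2 hw' hwr hOther
    rcases hchar q with hFq | hOq <;> rcases hchar w with hFw | hOw
    · -- both fan edges
      obtain ⟨i, hi1, hi2, hci⟩ := hFq
      obtain ⟨j, hj1, hj2, hcj⟩ := hFw
      rcases hci with ⟨hpr, hqe⟩ | ⟨hpi, hqr⟩ <;> rcases hcj with ⟨hpr', hwe⟩ | ⟨hpj, hwr⟩
      · have hij : i ≠ j := by
          intro hh
          exact hne (hqe.trans (by rw [hh, ← hwe]))
        rw [hpr, hqe, hwe, hfFan i hi1 hi2, hfFan j hj1 hj2]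
        split_ifs <;> omega
      · exact absurd (hpj.symm.trans hpr) (hsr j hj1 hj2)
      · exact absurd (hpi.symm.trans hpr') (hsr i hi1 hi2)
      · exact absurd (hqr.trans hwr.symm) hne
    · exact key q w hq hw hne hFq hOw
    · exact (key w q hw hq hne.symm hFw hOq).symm
    · rw [hfOther _ hOq, hfOther _ hOw]
      exact ψ.proper p q w (hnotdel _ _ hOq hq) (hnotdel _ _ hOw hw) hne

end ShiftExtend
theorem statement_18 [Fintype V] [DecidableEq V]
    (G : SimpleGraph V) [DecidableRel G.Adj]
    (hHZ : IsHZ G) (hDelta : 3 ≤ G.maxDegree)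
    (r : V) (s : ℕ → V)
    (hr : G.degree r = G.maxDegree) (hlab : NbrLabeling G r s)
    (φ : EdgeColoring (G.deleteEdges {s(r, s 1)}) G.maxDegree)
    (α : ℕ) (hF : IsTypicalMultifan G r s α α φ)
    (u x : V) (hL : IsLollipop G r s α u x)
    (hru : φ.color s(r, u) = α + 1)
    (hx : φ.missing x = {α + 1})
    (μ : ℕ) (hμF : μ ∈ φ.missing r ∨ ∃ i ∈ Set.Icc 1 α, μ ∈ φ.missing (s i))
    (hμ : Is2InducingColor α μ)
    (hux : φ.color s(u, x) = μ)
    (hadj : G.Adj u (s (μ - 1)))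
    (τ : ℕ) (hτ : φ.color s(u, s (μ - 1)) = τ) :
    ∀ φ' : EdgeColoring (G.deleteEdges {s(r, s 1)}) G.maxDegree,
      LollipopStable φ φ' r s α u x →
      φ'.color s(u, s (μ - 1)) ≠ 1 ∧
      (φ'.color s(u, s (μ - 1)) = τ →
        (chainGraph φ' 1 τ).Adj u (s (μ - 1)) ∧ (chainGraph φ' 1 τ).Reachable r u) := by
  classical
  obtain ⟨-, hC2, -⟩ := hHZ
  obtain ⟨hα1, -, hαΔ, hMF, hdegs, hmr, hms1, hmsi, -⟩ := hF
  obtain ⟨-, hadjs, hinjs, -⟩ := hMF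
  obtain ⟨hGru, hdegu, hGux, hdegx, hxr, hxs⟩ := hL
  obtain ⟨hμ2, hμub⟩ := hμ
  have hΔ3 : 3 ≤ G.maxDegree := hDelta
  -- basic distinctness
  have hdegs1 : G.degree (s 1) = G.maxDegree - 1 := hdegs 1 ⟨le_rfl, hα1⟩
  have hur : u ≠ r := hGru.ne'
  have hus1 : u ≠ s 1 := by
    intro h; rw [h, hdegs1] at hdegu; omega
  have husi : ∀ i, 1 ≤ i → i ≤ α → u ≠ s i := by
    intro i h1 h2 h; rw [h, hdegs i ⟨h1, h2⟩] at hdegu; omega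
  have hsir : ∀ i, 1 ≤ i → i ≤ α → s i ≠ r := fun i h1 h2 => (hadjs i ⟨h1, h2⟩).2
  have hs1r : s 1 ≠ r := hsir 1 le_rfl hα1
  have hxu : x ≠ u := hGux.ne'
  have hxsi : ∀ i, 1 ≤ i → i ≤ α → x ≠ s i := fun i h1 h2 => hxs i ⟨h1, h2⟩
  -- H-adjacency
  have mkH : ∀ {p q : V}, G.Adj p q → ¬(p = r ∧ q = s 1) → ¬(p = s 1 ∧ q = r) →
      (G.deleteEdges {s(r, s 1)}).Adj p q := by
    intro p q h h1 h2
    rw [SimpleGraph.deleteEdges_adj]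
    refine ⟨h, fun hm => ?_⟩
    rcases Sym2.eq_iff.mp (Set.mem_singleton_iff.mp hm) with hcase | hcase
    exacts [h1 hcase, h2 hcase]
  have HAdj_ru : (G.deleteEdges {s(r, s 1)}).Adj r u :=
    mkH hGru (fun hh => hus1 hh.2) (fun hh => hs1r hh.1.symm)
  have HAdj_ux : (G.deleteEdges {s(r, s 1)}).Adj u x :=
    mkH hGux (fun hh => hur hh.1) (fun hh => hus1 hh.1)
  have HAdj_usμ : (G.deleteEdges {s(r, s 1)}).Adj u (s (μ - 1)) :=
    mkH hadj (fun hh => hur hh.1) (fun hh => hus1 hh.1)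
  have HAdj_rsi : ∀ i, 2 ≤ i → i ≤ α → (G.deleteEdges {s(r, s 1)}).Adj r (s i) := by
    intro i h2 hα'
    refine mkH (hadjs i ⟨by omega, hα'⟩).1 (fun hh => ?_) (fun hh => hs1r hh.1.symm)
    have := hinjs (Set.mem_Icc.mpr ⟨by omega, hα'⟩) (Set.mem_Icc.mpr ⟨le_rfl, hα1⟩) hh.2
    omega
  -- μ facts
  have hμcomm : φ.color s(u, r) = α + 1 := (φ.color_comm u r).trans hru
  have hμne : μ ≠ α + 1 := by
    have := φ.proper u x r HAdj_ux HAdj_ru.symm hxr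
    rw [hux, hμcomm] at this; exact this
  have hμα : μ ≤ α := by omega
  have hα2 : 2 ≤ α := by omega
  -- missing facts for φ
  have hmsi' : ∀ i, 2 ≤ i → i ≤ α → φ.color s(r, s i) = i ∧ φ.missing (s i) = {i + 1} :=
    fun i h2 hα' => hmsi i ⟨h2, hα'⟩ (by omega)
  have hone : ∀ i, 1 ≤ i → i ≤ α → 1 ∉ φ.missing (s i) := by
    intro i h1 h2 hmem
    by_cases hi1 : i = 1
    · rw [hi1, hms1] at hmem
      simp only [Set.mem_insert_iff, Set.mem_singleton_iff] at hmem
      omega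
    · rw [(hmsi' i (by omega) h2).2] at hmem
      simp only [Set.mem_singleton_iff] at hmem
      omega
  have hap1 : ∀ i, 1 ≤ i → i ≤ α - 1 → (α + 1) ∉ φ.missing (s i) := by
    intro i h1 h2 hmem
    by_cases hi1 : i = 1
    · rw [hi1, hms1] at hmem
      simp only [Set.mem_insert_iff, Set.mem_singleton_iff] at hmem
      omega
    · rw [(hmsi' i (by omega) (by omega)).2] at hmem
      simp only [Set.mem_singleton_iff] at hmem
      omega
  have hmissφ : ∀ i, 1 ≤ i → i ≤ α - 1 → (i + 1) ∈ φ.missing (s i) := by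
    intro i h1 h2
    by_cases hi1 : i = 1
    · rw [hi1, hms1]
      exact Set.mem_insert _ _
    · rw [(hmsi' i (by omega) (by omega)).2]
      exact rfl
  have hμmiss : μ ∈ φ.missing (s (μ - 1)) := by
    by_cases hμ2' : μ = 2
    · have h11 : μ - 1 = 1 := by omega
      rw [h11, hms1, hμ2']
      exact Set.mem_insert _ _
    · rw [(hmsi' (μ - 1) (by omega) (by omega)).2]
      have h11 : μ - 1 + 1 = μ := by omega
      rw [h11]
      exact rfl
  have hmsαφ : φ.missing (s α) = {α + 1} := (hmsi' α hα2 le_rfl).2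
  -- τ facts
  have hτIcc : τ ∈ Set.Icc 1 G.maxDegree := by
    rw [← hτ]
    exact φ.mem_Icc _ ((SimpleGraph.mem_edgeSet _).mpr HAdj_usμ)
  have hτμ : τ ≠ μ := by
    have h2 := φ.missing_ne hμmiss HAdj_usμ.symm
    rw [φ.color_comm (s (μ - 1)) u, hτ] at h2
    exact h2
  have hταp1 : τ ≠ α + 1 := by
    have h2 := φ.proper u (s (μ - 1)) r HAdj_usμ HAdj_ru.symm
      (fun hh => (hsir (μ - 1) (by omega) (by omega)) hh)
    rw [hτ, hμcomm] at h2
    exact h2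
  -- Icc facts
  have h1I : (1 : ℕ) ∈ Set.Icc 1 G.maxDegree := ⟨le_rfl, by omega⟩
  have hμI : μ ∈ Set.Icc 1 G.maxDegree := ⟨by omega, by omega⟩
  have hαI : (α + 1) ∈ Set.Icc 1 G.maxDegree := ⟨by omega, by omega⟩
  -- unpacking stability
  have unpack : ∀ ψ : EdgeColoring (G.deleteEdges {s(r, s 1)}) G.maxDegree,
      LollipopStable φ ψ r s α u x →
      ψ.missing r = {1} ∧ (∀ i, 1 ≤ i → i ≤ α → ψ.missing (s i) = φ.missing (s i)) ∧
      (∀ i, 2 ≤ i → i ≤ α → ψ.color s(r, s i) = i) ∧ ψ.missing u = φ.missing u ∧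
      ψ.missing x = {α + 1} ∧ ψ.color s(r, u) = α + 1 ∧ ψ.color s(u, x) = μ := by
    intro ψ hst
    obtain ⟨⟨h1, h2, h3⟩, h4, h5, h6, h7⟩ := hst
    exact ⟨h1.trans hmr, fun i ha hb => h2 i ⟨ha, hb⟩,
      fun i ha hb => (h3 i ⟨ha, hb⟩).trans (hmsi' i ha hb).1,
      h4, h5.trans hx, h6.trans hru, h7.trans hux⟩
  -- ===== Claim 1: no stable coloring assigns 1 to u s_{μ-1} =====
  have key1 : ∀ ψ : EdgeColoring (G.deleteEdges {s(r, s 1)}) G.maxDegree,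
      LollipopStable φ ψ r s α u x → ψ.color s(u, s (μ - 1)) ≠ 1 := by
    intro ψ hst h1c
    obtain ⟨ψmr, ψms, ψcol, ψmu, ψmx, ψcru, ψcux⟩ := unpack ψ hst
    have hone' : ∀ i, 1 ≤ i → i ≤ α → 1 ∉ ψ.missing (s i) := by
      intro i ha hb
      rw [ψms i ha hb]; exact hone i ha hb
    have hap1' : ∀ i, 1 ≤ i → i ≤ α - 1 → (α + 1) ∉ ψ.missing (s i) := by
      intro i ha hb
      rw [ψms i ha (by omega)]; exact hap1 i ha hb
    have hmissψ : ∀ i, 1 ≤ i → i ≤ α - 1 → (i + 1) ∈ ψ.missing (s i) := by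
      intro i ha hb
      rw [ψms i ha (by omega)]; exact hmissφ i ha hb
    have hmsα : ψ.missing (s α) = {α + 1} := by
      rw [ψms α (by omega) le_rfl]; exact hmsαφ
    have hμmiss' : μ ∈ ψ.missing (s (μ - 1)) := by
      rw [ψms (μ - 1) (by omega) (by omega)]; exact hμmiss
    have hKu : (chainGraph ψ 1 (α + 1)).Reachable r u :=
      SimpleGraph.Adj.reachable ⟨HAdj_ru, Or.inr ψcru⟩
    have hKsμ : (chainGraph ψ 1 (α + 1)).Reachable r (s (μ - 1)) :=
      hKu.trans (SimpleGraph.Adj.reachable ⟨HAdj_usμ, Or.inl h1c⟩)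
    by_cases hKsα : (chainGraph ψ 1 (α + 1)).Reachable r (s α)
    · by_cases hKx : (chainGraph ψ 1 (α + 1)).Reachable r x
      · -- K3 : three pendant vertices r, s α, x on one chain
        have pend_r := chain_pendant_left ψ (α + 1)
          (show (1 : ℕ) ∈ ψ.missing r by rw [ψmr]; exact rfl)
        have pend_sα := chain_pendant_right ψ 1
          (show (α + 1) ∈ ψ.missing (s α) by rw [hmsα]; exact rfl)
        have pend_x := chain_pendant_right ψ 1
          (show (α + 1) ∈ ψ.missing x by rw [ψmx]; exact rfl)
        exact three_pendant (chain_maxdeg ψ 1 (α + 1)) pend_r pend_sα pend_x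
          (Ne.symm (hsir α (by omega) le_rfl)) (Ne.symm hxr)
          (Ne.symm (hxsi α (by omega) le_rfl)) hKsα hKx
      · -- K2 : swap the chain of x, then swap {s (μ-1), u, x}, then shift
        have notRx : ∀ y, (chainGraph ψ 1 (α + 1)).Reachable r y →
            ¬(chainGraph ψ 1 (α + 1)).Reachable x y :=
          fun y hry hxy => hKx (hry.trans hxy.symm)
        have nxr : ¬(chainGraph ψ 1 (α + 1)).Reachable x r :=
          notRx r (SimpleGraph.Reachable.refl r)
        have nxu : ¬(chainGraph ψ 1 (α + 1)).Reachable x u := notRx u hKu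
        have nxsμ : ¬(chainGraph ψ 1 (α + 1)).Reachable x (s (μ - 1)) := notRx _ hKsμ
        obtain ⟨φ₂, hP1, hP2, hP3, hP4, hP5, hP6, hP7⟩ :
            ∃ φ₂ : EdgeColoring (G.deleteEdges {s(r, s 1)}) G.maxDegree,
              φ₂.color s(u, s (μ - 1)) = 1 ∧
              φ₂.color s(u, x) = μ ∧
              φ₂.missing r = {1} ∧
              (∀ i, 2 ≤ i → i ≤ μ - 1 → φ₂.color s(r, s i) = i) ∧
              (∀ i, 1 ≤ i → i ≤ μ - 2 → (i + 1) ∈ φ₂.missing (s i)) ∧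
              μ ∈ φ₂.missing (s (μ - 1)) ∧
              1 ∈ φ₂.missing x := by
          refine ⟨ψ.swap 1 (α + 1) h1I hαI x, ?_, ?_, ?_, ?_, ?_, ?_, ?_⟩
          · rw [swap_color, swapFun_eq_of_not_reach nxu nxsμ]; exact h1c
          · rw [swap_color, swapFun_eq_of_color (by rw [ψcux]; omega) (by rw [ψcux]; omega)]
            exact ψcux
          · rw [missing_swap_of_not_reach nxr]; exact ψmr
          · intro i h2 hb
            have hci := ψcol i h2 (by omega)
            rw [swap_color, swapFun_eq_of_color (by rw [hci]; omega) (by rw [hci]; omega)]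
            exact hci
          · intro i ha hb
            by_cases hr2 : (chainGraph ψ 1 (α + 1)).Reachable x (s i)
            · obtain ⟨wa, hwa, hca⟩ := ψ.exists_edge h1I (hone' i ha (by omega))
              obtain ⟨wb, hwb, hcb⟩ := ψ.exists_edge hαI (hap1' i ha (by omega))
              rw [missing_swap_internal (by omega) hr2 hwa hca hwb hcb]
              exact hmissψ i ha (by omega)
            · rw [missing_swap_of_not_reach hr2]
              exact hmissψ i ha (by omega)
          · rw [missing_swap_of_not_reach nxsμ]; exact hμmiss'
          · obtain ⟨wa, hwa, hca⟩ := ψ.exists_edge h1I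
              (show (1 : ℕ) ∉ ψ.missing x by
                rw [ψmx]; intro hh
                have := Set.mem_singleton_iff.mp hh; omega)
            rw [missing_swap_pendant (by omega) (SimpleGraph.Reachable.refl x) hwa hca
              (by rw [ψmx]; exact rfl)]
            exact Set.mem_insert _ _
        have hclosed : ∀ v ∈ ({s (μ - 1), u, x} : Set V), ∀ w,
            (chainGraph φ₂ 1 μ).Adj v w → w ∈ ({s (μ - 1), u, x} : Set V) := by
          intro v hv w hw
          simp only [Set.mem_insert_iff, Set.mem_singleton_iff] at hv ⊢
          rcases hv with hv | hv | hv <;> rw [hv] at hw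
          · rcases hw.2 with hc | hc
            · right; left
              by_contra hne
              apply φ₂.proper (s (μ - 1)) w u hw.1 HAdj_usμ.symm hne
              rw [hc, φ₂.color_comm (s (μ - 1)) u, hP1]
            · exact absurd hc (φ₂.missing_ne hP6 hw.1)
          · rcases hw.2 with hc | hc
            · left
              by_contra hne
              exact φ₂.proper u w (s (μ - 1)) hw.1 HAdj_usμ hne (by rw [hc, hP1])
            · right; right
              by_contra hne
              exact φ₂.proper u w x hw.1 HAdj_ux hne (by rw [hc, hP2])
          · rcases hw.2 with hc | hc
            · exact absurd hc (φ₂.missing_ne hP7 hw.1)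
            · right; left
              by_contra hne
              apply φ₂.proper x w u hw.1 HAdj_ux.symm hne
              rw [hc, φ₂.color_comm x u, hP2]
        have hnotM : ¬(chainGraph φ₂ 1 μ).Reachable (s (μ - 1)) r := by
          intro hr2
          have hmem := reachable_mem_of_closed hclosed (by simp) hr2
          simp only [Set.mem_insert_iff, Set.mem_singleton_iff] at hmem
          rcases hmem with h | h | h
          · exact (hsir (μ - 1) (by omega) (by omega)) h.symm
          · exact hur h.symm
          · exact hxr h.symm
        have hnsi : ∀ i, 1 ≤ i → i ≤ μ - 2 →
            ¬(chainGraph φ₂ 1 μ).Reachable (s (μ - 1)) (s i) := by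
          intro i ha hb hr2
          have hmem := reachable_mem_of_closed hclosed (by simp) hr2
          simp only [Set.mem_insert_iff, Set.mem_singleton_iff] at hmem
          rcases hmem with h | h | h
          · have := hinjs (Set.mem_Icc.mpr ⟨ha, by omega⟩)
              (Set.mem_Icc.mpr ⟨by omega, by omega⟩) h
            omega
          · exact (husi i ha (by omega)) h.symm
          · exact (hxsi i ha (by omega)) h.symm
        refine shift_extend G hC2 r s (μ - 1) (by omega) (by omega)
          (φ₂.swap 1 μ h1I hμI (s (μ - 1)))
          (fun i ha hb => (hadjs i ⟨ha, by omega⟩).1)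
          (fun i j ha hb hc hd he =>
            hinjs (Set.mem_Icc.mpr ⟨ha, by omega⟩) (Set.mem_Icc.mpr ⟨hc, by omega⟩) he)
          ?_ ?_ ?_ ?_
        · rw [missing_swap_of_not_reach hnotM, hP3]; exact rfl
        · intro i h2 hb
          have hci := hP4 i h2 hb
          rw [swap_color, swapFun_eq_of_color (by rw [hci]; omega) (by rw [hci]; omega)]
          exact hci
        · intro i ha hb
          rw [missing_swap_of_not_reach (hnsi i ha (by omega))]
          exact hP5 i ha (by omega)
        · have hca : φ₂.color s(s (μ - 1), u) = 1 :=
            (φ₂.color_comm (s (μ - 1)) u).trans hP1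
          rw [missing_swap_pendant (by omega) (SimpleGraph.Reachable.refl _)
            HAdj_usμ.symm hca hP6]
          exact Set.mem_insert _ _
    · -- K1 : swap the chain of s α, then shift the whole fan
      have notRs : ¬(chainGraph ψ 1 (α + 1)).Reachable (s α) r := fun h => hKsα h.symm
      refine shift_extend G hC2 r s α hα1 (by omega) (ψ.swap 1 (α + 1) h1I hαI (s α))
        (fun i ha hb => (hadjs i ⟨ha, hb⟩).1)
        (fun i j ha hb hc hd he =>
          hinjs (Set.mem_Icc.mpr ⟨ha, hb⟩) (Set.mem_Icc.mpr ⟨hc, hd⟩) he)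
        ?_ ?_ ?_ ?_
      · rw [missing_swap_of_not_reach notRs, ψmr]; exact rfl
      · intro i h2 hb
        have hci := ψcol i h2 hb
        rw [swap_color, swapFun_eq_of_color (by rw [hci]; omega) (by rw [hci]; omega)]
        exact hci
      · intro i ha hb
        by_cases hr2 : (chainGraph ψ 1 (α + 1)).Reachable (s α) (s i)
        · obtain ⟨wa, hwa, hca⟩ := ψ.exists_edge h1I (hone' i ha (by omega))
          obtain ⟨wb, hwb, hcb⟩ := ψ.exists_edge hαI (hap1' i ha (by omega))
          rw [missing_swap_internal (by omega) hr2 hwa hca hwb hcb]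
          exact hmissψ i ha (by omega)
        · rw [missing_swap_of_not_reach hr2]
          exact hmissψ i ha (by omega)
      · obtain ⟨wa, hwa, hca⟩ := ψ.exists_edge h1I (hone' α (by omega) le_rfl)
        rw [missing_swap_pendant (by omega) (SimpleGraph.Reachable.refl _) hwa hca
          (by rw [hmsα]; exact rfl)]
        exact Set.mem_insert _ _
  -- τ is not 1
  have hτ1 : τ ≠ 1 := by
    have hrefl : LollipopStable φ φ r s α u x :=
      ⟨⟨rfl, fun i _ => rfl, fun i _ => rfl⟩, rfl, rfl, rfl, rfl⟩
    have h2 := key1 φ hrefl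
    rw [hτ] at h2
    exact h2
  -- ===== main conclusion =====
  intro φ' hst
  refine ⟨key1 φ' hst, fun hc => ⟨⟨HAdj_usμ, Or.inr hc⟩, ?_⟩⟩
  by_contra hnr
  obtain ⟨ψmr', ψms', ψcol', ψmu', ψmx', ψcru', ψcux'⟩ := unpack φ' hst
  have hnur : ¬(chainGraph φ' 1 τ).Reachable u r := fun h => hnr h.symm
  by_cases hjcase : ∃ j, 1 ≤ j ∧ j ≤ α ∧ τ ∈ φ'.missing (s j) ∧
      (chainGraph φ' 1 τ).Reachable u (s j)
  · -- case (b): swap the chain of u; s j turns 1-missing; shift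
    obtain ⟨j, hj1, hjα, hjτ, hjR⟩ := hjcase
    have hτval : j = 1 ∨ τ = j + 1 := by
      by_cases hj1' : j = 1
      · exact Or.inl hj1'
      · right
        have hmem := hjτ
        rw [ψms' j hj1 hjα, (hmsi' j (by omega) hjα).2] at hmem
        exact Set.mem_singleton_iff.mp hmem
    refine shift_extend G hC2 r s j hj1 (by omega) (φ'.swap 1 τ h1I hτIcc u)
      (fun i ha hb => (hadjs i ⟨ha, by omega⟩).1)
      (fun i i' ha hb hc' hd he =>
        hinjs (Set.mem_Icc.mpr ⟨ha, by omega⟩) (Set.mem_Icc.mpr ⟨hc', by omega⟩) he)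
      ?_ ?_ ?_ ?_
    · rw [missing_swap_of_not_reach hnur, ψmr']; exact rfl
    · intro i h2 hb
      have hτj : τ = j + 1 := by
        rcases hτval with h | h
        · omega
        · exact h
      have hci := ψcol' i h2 (by omega)
      rw [swap_color, swapFun_eq_of_color (by rw [hci]; omega) (by rw [hci]; omega)]
      exact hci
    · intro i ha hb
      have hτj : τ = j + 1 := by
        rcases hτval with h | h
        · omega
        · exact h
      by_cases hr2 : (chainGraph φ' 1 τ).Reachable u (s i)
      · obtain ⟨wa, hwa, hca⟩ := φ'.exists_edge h1I
          (show (1 : ℕ) ∉ φ'.missing (s i) by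
            rw [ψms' i ha (by omega)]; exact hone i ha (by omega))
        have hτnot : τ ∉ φ'.missing (s i) := by
          rw [ψms' i ha (by omega)]
          by_cases hi1 : i = 1
          · rw [hi1, hms1]
            intro hh
            simp only [Set.mem_insert_iff, Set.mem_singleton_iff] at hh
            omega
          · rw [(hmsi' i (by omega) (by omega)).2]
            intro hh
            simp only [Set.mem_singleton_iff] at hh
            omega
        obtain ⟨wb, hwb, hcb⟩ := φ'.exists_edge hτIcc hτnot
        rw [missing_swap_internal (Ne.symm hτ1) hr2 hwa hca hwb hcb]
        rw [ψms' i ha (by omega)]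
        exact hmissφ i ha (by omega)
      · rw [missing_swap_of_not_reach hr2]
        rw [ψms' i ha (by omega)]
        exact hmissφ i ha (by omega)
    · obtain ⟨wa, hwa, hca⟩ := φ'.exists_edge h1I
        (show (1 : ℕ) ∉ φ'.missing (s j) by
          rw [ψms' j hj1 hjα]; exact hone j hj1 hjα)
      rw [missing_swap_pendant (Ne.symm hτ1) hjR hwa hca hjτ]
      exact Set.mem_insert _ _
  · -- case (a): the swapped coloring is lollipop-stable and colors u s_{μ-1} with 1
    push_neg at hjcase
    have hval : (φ'.swap 1 τ h1I hτIcc u).color s(u, s (μ - 1)) = 1 := by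
      rw [swap_color]
      exact swapFun_b (Ne.symm hτ1) (Or.inl (SimpleGraph.Reachable.refl u)) hc
    have hstab2 : LollipopStable φ (φ'.swap 1 τ h1I hτIcc u) r s α u x := by
      refine ⟨⟨?_, ?_, ?_⟩, ?_, ?_, ?_, ?_⟩
      · rw [missing_swap_of_not_reach hnur, ψmr', hmr]
      · intro i hi
        by_cases hr2 : (chainGraph φ' 1 τ).Reachable u (s i)
        · have hτnot : τ ∉ φ'.missing (s i) := fun hmem => (hjcase i hi.1 hi.2 hmem) hr2
          obtain ⟨wa, hwa, hca⟩ := φ'.exists_edge h1I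
            (show (1 : ℕ) ∉ φ'.missing (s i) by
              rw [ψms' i hi.1 hi.2]; exact hone i hi.1 hi.2)
          obtain ⟨wb, hwb, hcb⟩ := φ'.exists_edge hτIcc hτnot
          rw [missing_swap_internal (Ne.symm hτ1) hr2 hwa hca hwb hcb]
          exact ψms' i hi.1 hi.2
        · rw [missing_swap_of_not_reach hr2]
          exact ψms' i hi.1 hi.2
      · intro i hi
        have hi2 : 2 ≤ i := hi.1
        have hiα : i ≤ α := hi.2
        have hci := ψcol' i hi.1 hi.2
        have hφi : φ.color s(r, s i) = i := (hmsi' i hi.1 hi.2).1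
        by_cases hiτ : i = τ
        · have hnsτ : ¬(chainGraph φ' 1 τ).Reachable u (s i) := by
            intro hr2
            apply hnur
            refine hr2.trans (SimpleGraph.Adj.reachable ⟨(HAdj_rsi i hi.1 hi.2).symm, Or.inr ?_⟩)
            rw [φ'.color_comm (s i) r, hci, hiτ]
          rw [swap_color, swapFun_eq_of_not_reach hnur hnsτ, hci, hφi]
        · rw [swap_color, swapFun_eq_of_color (by rw [hci]; omega)
            (by rw [hci]; exact hiτ), hci, hφi]
      · obtain ⟨wa, hwa, hca⟩ := all_colors_at_full G r (s 1) φ' hur hus1 hdegu h1I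
        rw [missing_swap_internal (Ne.symm hτ1) (SimpleGraph.Reachable.refl u)
          hwa hca HAdj_usμ hc]
        exact ψmu'
      · by_cases hr2 : (chainGraph φ' 1 τ).Reachable u x
        · obtain ⟨wa, hwa, hca⟩ := φ'.exists_edge h1I
            (show (1 : ℕ) ∉ φ'.missing x by
              rw [ψmx']; intro hh
              have := Set.mem_singleton_iff.mp hh; omega)
          obtain ⟨wb, hwb, hcb⟩ := φ'.exists_edge hτIcc
            (show τ ∉ φ'.missing x by
              rw [ψmx']; intro hh
              exact hταp1 (Set.mem_singleton_iff.mp hh))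
          rw [missing_swap_internal (Ne.symm hτ1) hr2 hwa hca hwb hcb]
          rw [ψmx', hx]
        · rw [missing_swap_of_not_reach hr2]
          rw [ψmx', hx]
      · rw [swap_color, swapFun_eq_of_color (by rw [ψcru']; omega)
          (by rw [ψcru']; exact fun hh => hταp1 hh.symm), ψcru', hru]
      · rw [swap_color, swapFun_eq_of_color (by rw [ψcux']; omega)
          (by rw [ψcux']; exact fun hh => hτμ hh.symm), ψcux', hux]
    exact key1 (φ'.swap 1 τ h1I hτIcc u) hstab2 hval
end
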